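/- arXiv:1801.05375 — 7 statements merged into one kernel-verified Lean document; each statement's English description precedes it below -/
import Mathlib

section
/- Let A be a real d×d matrix all of whose (complex) eigenvalues have strictly negative real part, let M := ∫₀^∞ e^{sAᵀ} e^{sA} ds, and let F : ℝ^d → ℝ^d be a continuous map for which there exists a ∈ [0,1) with sup_{x∈ℝ^d} |F(x)|/(1+|x|)^a < ∞. Then there exists a constant c₂ > 0 such that 2⟨Mx, Ax + F(x)⟩ ≤ −(1/2)|x|² + c₂ for all x ∈ ℝ^d. -/
open Matrix MeasureTheory

namespace Stmt2Aux

open NormedSpace Filter Set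

open scoped NNReal ENNReal Topology

attribute [local instance] Matrix.linftyOpNormedAddCommGroup Matrix.linftyOpNormedRing
  Matrix.linftyOpNormedAlgebra

variable {d : ℕ}

/-- entry is bounded by linfty operator norm -/
lemma entry_le_norm (P : Matrix (Fin d) (Fin d) ℝ) (i j : Fin d) : |P i j| ≤ ‖P‖ := by
  have h : ‖P i j‖₊ ≤ ‖P‖₊ := by
    rw [Matrix.linfty_opNNNorm_def]
    exact le_trans
      (Finset.single_le_sum (f := fun j' => ‖P i j'‖₊) (fun _ _ => zero_le) (Finset.mem_univ j))
      (Finset.le_sup (f := fun i => ∑ j : Fin d, ‖P i j‖₊) (Finset.mem_univ i))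
  exact_mod_cast h

lemma nnnorm_map_ofReal (B : Matrix (Fin d) (Fin d) ℝ) :
    ‖B.map (Complex.ofReal ·)‖₊ = ‖B‖₊ := by
  rw [Matrix.linfty_opNNNorm_def, Matrix.linfty_opNNNorm_def]
  congr 1
  ext i
  simp [Matrix.map_apply]

/-- spectrum of the transpose -/
lemma spectrum_transpose (B : Matrix (Fin d) (Fin d) ℂ) :
    spectrum ℂ Bᵀ = spectrum ℂ B := by
  have htr : ∀ (P : Matrix (Fin d) (Fin d) ℂ) (μ : ℂ),
      (algebraMap ℂ (Matrix (Fin d) (Fin d) ℂ) μ - P)ᵀ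
        = algebraMap ℂ (Matrix (Fin d) (Fin d) ℂ) μ - Pᵀ := by
    intro P μ
    ext i j
    by_cases h : i = j
    · subst h; simp [Matrix.transpose_apply, Matrix.sub_apply, Matrix.algebraMap_matrix_apply]
    · simp [Matrix.transpose_apply, Matrix.sub_apply, Matrix.algebraMap_matrix_apply, h,
        Ne.symm h]
  ext μ
  simp only [spectrum.mem_iff, not_iff_not]
  rw [Matrix.isUnit_iff_isUnit_det, Matrix.isUnit_iff_isUnit_det, ← htr,
    Matrix.det_transpose]

lemma exists_eigenvector {B : Matrix (Fin d) (Fin d) ℂ} {μ : ℂ}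
    (hμ : μ ∈ spectrum ℂ B) : ∃ v : Fin d → ℂ, v ≠ 0 ∧ B.mulVec v = μ • v := by
  rw [← AlgEquiv.spectrum_eq (Matrix.toLinAlgEquiv' (R := ℂ) (n := Fin d)),
    ← Module.End.hasEigenvalue_iff_mem_spectrum] at hμ
  obtain ⟨v, hv⟩ := hμ.exists_hasEigenvector
  refine ⟨v, hv.right, ?_⟩
  have h2 := hv.apply_eq_smul
  rwa [Matrix.toLinAlgEquiv'_apply] at h2

/-- `mulVec` with a fixed vector, as a continuous linear map on matrices -/
noncomputable def mulVecCLM (v : Fin d → ℂ) :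
    Matrix (Fin d) (Fin d) ℂ →L[ℂ] (Fin d → ℂ) :=
  LinearMap.toContinuousLinearMap
    { toFun := fun P => P.mulVec v
      map_add' := fun P Q => Matrix.add_mulVec P Q v
      map_smul' := fun c P => Matrix.smul_mulVec c P v }

@[simp] lemma mulVecCLM_apply (v : Fin d → ℂ) (P : Matrix (Fin d) (Fin d) ℂ) :
    mulVecCLM v P = P.mulVec v := rfl

lemma pow_mulVec_eig {B : Matrix (Fin d) (Fin d) ℂ} {μ : ℂ} {v : Fin d → ℂ}
    (hv : B.mulVec v = μ • v) (n : ℕ) : (B ^ n).mulVec v = μ ^ n • v := by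
  induction n with
  | zero => simp [Matrix.one_mulVec]
  | succ n ih =>
      rw [pow_succ']
      rw [← Matrix.mulVec_mulVec, ih, Matrix.mulVec_smul, hv, smul_smul, ← pow_succ]

lemma exp_mulVec_eig {B : Matrix (Fin d) (Fin d) ℂ} {μ : ℂ} {v : Fin d → ℂ}
    (hv : B.mulVec v = μ • v) : (exp B).mulVec v = Complex.exp μ • v := by
  have hsum : HasSum (fun n : ℕ => (n.factorial⁻¹ : ℂ) • B ^ n) (exp B) :=
    exp_series_hasSum_exp' B
  have h1 : HasSum (fun n : ℕ => ((n.factorial⁻¹ : ℂ) * μ ^ n) • v) ((exp B).mulVec v) := by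
    have h := (mulVecCLM v).hasSum hsum
    simp only [_root_.map_smul, mulVecCLM_apply] at h
    have hfun : (fun n : ℕ => (n.factorial⁻¹ : ℂ) • ((B ^ n).mulVec v))
        = fun n : ℕ => ((n.factorial⁻¹ : ℂ) * μ ^ n) • v := by
      funext n
      rw [pow_mulVec_eig hv, smul_smul]
    rwa [hfun] at h
  have h2 : HasSum (fun n : ℕ => ((n.factorial⁻¹ : ℂ) * μ ^ n) • v) (Complex.exp μ • v) := by
    have hμ : HasSum (fun n : ℕ => (n.factorial⁻¹ : ℂ) • μ ^ n) (exp μ) :=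
      exp_series_hasSum_exp' μ
    rw [Complex.exp_eq_exp_ℂ]
    simpa [smul_eq_mul] using hμ.smul_const v
  exact h1.unique h2

lemma aeval_mulVec_eig {B : Matrix (Fin d) (Fin d) ℂ} {μ : ℂ} {v : Fin d → ℂ}
    (hv : B.mulVec v = μ • v) (p : Polynomial ℂ) :
    (Polynomial.aeval B p).mulVec v = p.eval μ • v := by
  induction p using Polynomial.induction_on' with
  | add p q hp hq =>
      rw [map_add, Matrix.add_mulVec, hp, hq, Polynomial.eval_add, add_smul]
  | monomial n c =>
      rw [Polynomial.aeval_monomial, Polynomial.eval_monomial, ← Algebra.smul_def,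
        Matrix.smul_mulVec, pow_mulVec_eig hv, smul_smul]

lemma exp_mem_aeval_range (B : Matrix (Fin d) (Fin d) ℂ) :
    ∃ p : Polynomial ℂ, exp B = Polynomial.aeval B p := by
  have h1 : exp B ∈ Algebra.adjoin ℂ {B} := by
    have hclosed : IsClosed
        ((Subalgebra.toSubmodule (Algebra.adjoin ℂ {B}) : Submodule ℂ _) :
          Set (Matrix (Fin d) (Fin d) ℂ)) :=
      Submodule.closed_of_finiteDimensional _
    have hsum : HasSum (fun n : ℕ => (n.factorial⁻¹ : ℂ) • B ^ n) (exp B) :=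
      exp_series_hasSum_exp' B
    have := hclosed.mem_of_tendsto hsum.tendsto_sum_nat
      (Filter.Eventually.of_forall fun n => Submodule.sum_mem _ fun k _ =>
        Submodule.smul_mem _ _ (by
          exact Subalgebra.pow_mem _ (Algebra.self_mem_adjoin_singleton ℂ B) k))
    exact this
  rw [Algebra.adjoin_singleton_eq_range_aeval] at h1
  obtain ⟨p, hp⟩ := h1
  exact ⟨p, hp.symm⟩


lemma sr_exp_lt_one [Nonempty (Fin d)] {B : Matrix (Fin d) (Fin d) ℂ}
    (hB : ∀ μ ∈ spectrum ℂ B, μ.re < 0) :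
    spectralRadius ℂ (exp B) < 1 := by
  haveI : Nontrivial (Matrix (Fin d) (Fin d) ℂ) := by
    obtain ⟨i⟩ := (inferInstance : Nonempty (Fin d))
    refine ⟨⟨0, 1, fun h => ?_⟩⟩
    have := congrFun (congrFun h i) i
    simp [Matrix.one_apply] at this
  obtain ⟨p, hp⟩ := exp_mem_aeval_range B
  have key : ∀ z ∈ spectrum ℂ (exp B), ‖z‖₊ < 1 := by
    intro z hz
    rw [hp, spectrum.map_polynomial_aeval] at hz
    obtain ⟨μ, hμ, rfl⟩ := hz
    obtain ⟨v, hv0, hv⟩ := exists_eigenvector hμ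
    have h1 := aeval_mulVec_eig hv p
    rw [← hp, exp_mulVec_eig hv] at h1
    have h2 : Polynomial.eval μ p = Complex.exp μ :=
      smul_left_injective ℂ hv0 h1.symm
    show ‖Polynomial.eval μ p‖₊ < 1
    rw [h2]
    have h3 : ‖Complex.exp μ‖ < 1 := by
      rw [Complex.norm_exp]
      exact Real.exp_lt_one_iff.mpr (hB μ hμ)
    exact_mod_cast h3
  have := spectrum.spectralRadius_lt_of_forall_lt (exp B) key
  simpa using this

lemma decay (A : Matrix (Fin d) (Fin d) ℝ)
    (hA : ∀ μ ∈ spectrum ℂ (A.map (Complex.ofReal ·)), μ.re < 0) :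
    ∃ c > (0:ℝ), ∃ b > (0:ℝ), ∀ s : ℝ, 0 ≤ s →
      ‖exp (s • A)‖ ≤ c * Real.exp (-b * s) := by
  rcases isEmpty_or_nonempty (Fin d) with hd | hd
  · refine ⟨1, one_pos, 1, one_pos, fun s hs => ?_⟩
    have hz : exp (s • A) = 0 := by
      ext i j; exact isEmptyElim i
    rw [hz, norm_zero]
    positivity
  set B : Matrix (Fin d) (Fin d) ℂ := A.map (Complex.ofReal ·) with hBdef
  have hsr : spectralRadius ℂ (exp B) < 1 := sr_exp_lt_one hA
  obtain ⟨r, hr1, hr2⟩ := ENNReal.lt_iff_exists_nnreal_btwn.mp hsr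
  have hr0 : 0 < r := by
    rcases ((zero_le : (0:ℝ≥0) ≤ r)).eq_or_lt with h | h
    · exfalso
      rw [← h] at hr1
      simp at hr1
    · exact h
  have hrlt1 : r < 1 := by exact_mod_cast hr2
  have hr0R : (0:ℝ) < (r : ℝ) := hr0
  have hr1R : (r : ℝ) < 1 := hrlt1
  -- Gelfand's formula
  have hgel := spectrum.pow_nnnorm_pow_one_div_tendsto_nhds_spectralRadius (exp B)
  have hev : ∀ᶠ n : ℕ in atTop,
      ((‖(exp B) ^ n‖₊ : ℝ≥0∞) ^ (1/(n:ℝ))) < (r : ℝ≥0∞) :=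
    hgel.eventually_lt_const hr1
  obtain ⟨N, hN⟩ := Filter.eventually_atTop.mp hev
  -- relate complex and real matrix exponential
  have hcont : Continuous (Complex.ofRealHom.mapMatrix (m := Fin d) :
      Matrix (Fin d) (Fin d) ℝ →+* Matrix (Fin d) (Fin d) ℂ) := by
    apply continuous_matrix
    intro i j
    exact Complex.continuous_ofReal.comp ((continuous_apply j).comp (continuous_apply i))
  have hmapexp : exp B = (exp A).map (Complex.ofReal ·) := by
    have h1 : (Complex.ofRealHom.mapMatrix (m := Fin d)) (exp A)
        = exp (Complex.ofRealHom.mapMatrix (m := Fin d) A) :=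
      map_exp _ hcont A
    have h2 : exp (B) = exp (B) := by
      rfl
    rw [← h2, hBdef]
    exact h1.symm
  have hnormpow : ∀ n : ℕ, ‖(exp B) ^ n‖₊ = ‖(exp A) ^ n‖₊ := by
    intro n
    rw [hmapexp]
    have hcomm : ((exp A).map (Complex.ofReal ·)) ^ n
        = ((exp A) ^ n).map (Complex.ofReal ·) := by
      have h := map_pow (Complex.ofRealHom.mapMatrix (m := Fin d)) (exp A) n
      exact h.symm
    rw [hcomm, nnnorm_map_ofReal]
  set E : Matrix (Fin d) (Fin d) ℝ := exp A with hEdef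
  -- eventual geometric bound
  have hEn : ∀ n : ℕ, max N 1 ≤ n → ‖E ^ n‖ ≤ (r:ℝ) ^ n := by
    intro n hn
    have hnN : N ≤ n := le_trans (le_max_left _ _) hn
    have hn1 : 1 ≤ n := le_trans (le_max_right _ _) hn
    have hn0 : (n:ℝ) ≠ 0 := by exact_mod_cast Nat.one_le_iff_ne_zero.mp hn1
    have h := hN n hnN
    set x : ℝ≥0 := ‖(exp B) ^ n‖₊ with hxdef
    rw [← ENNReal.coe_rpow_of_nonneg x (by positivity : (0:ℝ) ≤ 1/(n:ℝ)),
      ENNReal.coe_lt_coe] at h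
    have hx : x ≤ r ^ n := by
      have h2 : (x ^ (1/(n:ℝ))) ^ (n:ℕ) ≤ r ^ n := pow_le_pow_left₀ zero_le h.le n
      rwa [← NNReal.rpow_natCast (x ^ (1/(n:ℝ))) n, ← NNReal.rpow_mul,
        one_div, inv_mul_cancel₀ hn0, NNReal.rpow_one] at h2
    have hx' : ‖E ^ n‖₊ ≤ r ^ n := by
      rw [← hnormpow n]
      exact hx
    calc ‖E ^ n‖ = ((‖E ^ n‖₊ : ℝ≥0) : ℝ) := rfl
      _ ≤ ((r ^ n : ℝ≥0) : ℝ) := by exact_mod_cast hx'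
      _ = (r:ℝ) ^ n := by push_cast; ring
  -- uniform geometric bound
  set K : ℝ := 1 + ∑ m ∈ Finset.range (max N 1), ‖E ^ m‖ / (r:ℝ) ^ m with hKdef
  have hsumnn : 0 ≤ ∑ m ∈ Finset.range (max N 1), ‖E ^ m‖ / (r:ℝ) ^ m :=
    Finset.sum_nonneg fun m _ => div_nonneg (norm_nonneg _) (pow_nonneg hr0R.le m)
  have hK1 : 1 ≤ K := by simp only [hKdef]; linarith
  have hKall : ∀ n : ℕ, ‖E ^ n‖ ≤ K * (r:ℝ) ^ n := by
    intro n
    by_cases hn : max N 1 ≤ n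
    · exact (hEn n hn).trans (le_mul_of_one_le_left (pow_nonneg hr0R.le n) hK1)
    · push_neg at hn
      have h1 : ‖E ^ n‖ / (r:ℝ) ^ n ≤ ∑ m ∈ Finset.range (max N 1), ‖E ^ m‖ / (r:ℝ) ^ m :=
        Finset.single_le_sum (f := fun m => ‖E ^ m‖ / (r:ℝ) ^ m)
          (fun m _ => div_nonneg (norm_nonneg _) (pow_nonneg hr0R.le m))
          (Finset.mem_range.mpr hn)
      have h2 : ‖E ^ n‖ / (r:ℝ) ^ n ≤ K := by simp only [hKdef]; linarith
      rw [div_le_iff₀ (pow_pos hr0R n)] at h2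
      linarith [h2]
  -- bound on [0,1]
  obtain ⟨M₀, hM₀⟩ := (isCompact_Icc (a := (0:ℝ)) (b := 1)).exists_bound_of_continuousOn
    (f := fun u : ℝ => exp (u • A))
    (((exp_continuous).comp (continuous_id.smul continuous_const)).continuousOn)
  set M₁ : ℝ := max M₀ 1 with hM₁def
  have hM₁pos : (0:ℝ) < M₁ := lt_of_lt_of_le one_pos (le_max_right _ _)
  set b : ℝ := -Real.log (r:ℝ) with hbdef
  have hb : 0 < b := by
    have := Real.log_neg hr0R hr1R
    simp only [hbdef]; linarith
  refine ⟨K * M₁ / (r:ℝ), by positivity, b, hb, fun s hs => ?_⟩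
  set n : ℕ := ⌊s⌋₊ with hndef
  set u : ℝ := s - n with hudef
  have hu0 : 0 ≤ u := sub_nonneg.mpr (Nat.floor_le hs)
  have hu1 : u ≤ 1 := by
    have := Nat.lt_floor_add_one s
    simp only [hudef]; linarith
  have hsplit : exp (s • A) = E ^ n * exp (u • A) := by
    have hsum : s • A = ((n:ℝ) • A) + (u • A) := by
      rw [← add_smul]
      congr 1
      simp only [hudef]; ring
    rw [hsum, Matrix.exp_add_of_commute _ _ (((Commute.refl A).smul_left ((n:ℝ))).smul_right u)]
    congr 1
    rw [hEdef, Nat.cast_smul_eq_nsmul ℝ n A, Matrix.exp_nsmul]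
  have hnorm1 : ‖exp (u • A)‖ ≤ M₁ :=
    le_trans (hM₀ u ⟨hu0, hu1⟩) (le_max_left _ _)
  have hlow : s - 1 ≤ (n:ℝ) := (Nat.sub_one_lt_floor s).le
  calc ‖exp (s • A)‖ ≤ ‖E ^ n‖ * ‖exp (u • A)‖ := by
        rw [hsplit]; exact norm_mul_le _ _
    _ ≤ (K * (r:ℝ) ^ n) * M₁ := by
        apply mul_le_mul (hKall n) hnorm1 (norm_nonneg _)
        positivity
    _ ≤ (K * (r:ℝ) ^ (s - 1 : ℝ)) * M₁ := by
        have : (r:ℝ) ^ (n:ℕ) ≤ (r:ℝ) ^ (s - 1 : ℝ) := by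
          rw [← Real.rpow_natCast (r:ℝ) n]
          exact Real.rpow_le_rpow_of_exponent_ge hr0R hr1R.le hlow
        have hKpos : (0:ℝ) < K := lt_of_lt_of_le one_pos hK1
        exact mul_le_mul_of_nonneg_right (mul_le_mul_of_nonneg_left this hKpos.le) hM₁pos.le
    _ = K * M₁ / (r:ℝ) * Real.exp (-b * s) := by
        rw [Real.rpow_def_of_pos hr0R,
          show Real.log (r:ℝ) * (s - 1) = -b * s + b by simp only [hbdef]; ring,
          Real.exp_add,
          show Real.exp b = (r:ℝ)⁻¹ by rw [hbdef, Real.exp_neg, Real.exp_log hr0R]]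
        field_simp


lemma growth (Dc : ℝ) (hD : 0 ≤ Dc) (a : ℝ) (ha0 : 0 ≤ a) (ha1 : a < 1) :
    ∃ c > (0:ℝ), ∀ t : ℝ, 0 ≤ t → Dc * (t * (1 + t) ^ a) ≤ (1/2) * t^2 + c := by
  have h1a : (0:ℝ) < 1 - a := by linarith
  set T : ℝ := max 1 ((4*Dc+1) ^ ((1-a)⁻¹)) with hTdef
  have hT1 : 1 ≤ T := le_max_left _ _
  have hTpow : 4*Dc+1 ≤ T ^ (1-a) := by
    calc 4*Dc+1 = ((4*Dc+1) ^ ((1-a)⁻¹)) ^ (1-a) := by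
          rw [← Real.rpow_mul (by linarith), inv_mul_cancel₀ h1a.ne', Real.rpow_one]
      _ ≤ T ^ (1-a) :=
          Real.rpow_le_rpow (Real.rpow_nonneg (by linarith) _) (le_max_right _ _) h1a.le
  have hcnn : 0 ≤ Dc * (T * (1 + T)) :=
    mul_nonneg hD (mul_nonneg (by linarith) (by linarith))
  refine ⟨Dc * (T * (1 + T)) + 1, by linarith, fun t ht => ?_⟩
  by_cases hcase : t ≤ T
  · have hpa : (1+t) ^ a ≤ 1 + t := by
      calc (1+t)^a ≤ (1+t)^(1:ℝ) :=
            Real.rpow_le_rpow_of_exponent_le (by linarith) (by linarith)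
        _ = 1 + t := Real.rpow_one _
    have hrp : (0:ℝ) ≤ (1+t)^a := Real.rpow_nonneg (by linarith) _
    have h2 : Dc * (t * (1+t)^a) ≤ Dc * (T * (1+T)) := by
      apply mul_le_mul_of_nonneg_left _ hD
      nlinarith
    nlinarith [sq_nonneg t]
  · push_neg at hcase
    have ht1 : 1 ≤ t := le_trans hT1 hcase.le
    have htpos : (0:ℝ) < t := by linarith
    have hstep1 : (1+t)^a ≤ 2 * t ^ a := by
      calc (1+t)^a ≤ (2*t)^a := Real.rpow_le_rpow (by linarith) (by linarith) ha0
        _ = 2^a * t^a := Real.mul_rpow (by norm_num) htpos.le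
        _ ≤ 2 * t^a := by
            have h2a : (2:ℝ)^a ≤ (2:ℝ)^(1:ℝ) :=
              Real.rpow_le_rpow_of_exponent_le one_le_two ha1.le
            rw [Real.rpow_one] at h2a
            have hta : (0:ℝ) ≤ t^a := Real.rpow_nonneg htpos.le _
            nlinarith
    have hta : t * t^a = t^(1+a) := by
      rw [Real.rpow_add htpos, Real.rpow_one]
    have hsplit : t^(1+a) = t^(a-1) * t^2 := by
      rw [← Real.rpow_natCast t 2, ← Real.rpow_add htpos]
      congr 1
      push_cast
      ring
    have hinv : t^(a-1) ≤ (4*Dc+1)⁻¹ := by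
      have h1 : T ^ (1-a) ≤ t ^ (1-a) := Real.rpow_le_rpow (by linarith) hcase.le h1a.le
      have h2 : 4*Dc+1 ≤ t^(1-a) := le_trans hTpow h1
      have h3 : t^(a-1) = (t^(1-a))⁻¹ := by
        rw [← Real.rpow_neg htpos.le]
        norm_num
      rw [h3]
      exact inv_anti₀ (by linarith) h2
    have hcoef : 2*Dc*(4*Dc+1)⁻¹ ≤ 1/2 := by
      have hpos : (0:ℝ) < 4*Dc+1 := by linarith
      rw [← div_eq_mul_inv, div_le_div_iff₀ hpos two_pos]
      linarith
    have htanonneg : (0:ℝ) ≤ t ^ a := Real.rpow_nonneg htpos.le _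
    have hchain : Dc * (t * (1+t)^a) ≤ 2*Dc*(t^(a-1)) * t^2 := by
      calc Dc * (t * (1+t)^a) ≤ Dc * (t * (2 * t^a)) := by
            apply mul_le_mul_of_nonneg_left _ hD
            exact mul_le_mul_of_nonneg_left hstep1 htpos.le
        _ = 2*Dc * (t * t^a) := by ring
        _ = 2*Dc * (t^(a-1) * t^2) := by rw [hta, hsplit]
        _ = 2*Dc*(t^(a-1)) * t^2 := by ring
    have hfin : 2*Dc*(t^(a-1)) * t^2 ≤ (1/2) * t^2 := by
      apply mul_le_mul_of_nonneg_right _ (sq_nonneg t)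
      calc 2*Dc*(t^(a-1)) ≤ 2*Dc*(4*Dc+1)⁻¹ :=
            mul_le_mul_of_nonneg_left hinv (by linarith)
        _ ≤ 1/2 := hcoef
    linarith

lemma lyap (A M : Matrix (Fin d) (Fin d) ℝ)
    (hA : ∀ μ ∈ spectrum ℂ (A.map (Complex.ofReal ·)), μ.re < 0)
    (hM : ∀ i j : Fin d, M i j = ∫ s in Set.Ioi (0 : ℝ),
        (exp (s • Aᵀ) * exp (s • A)) i j) :
    Aᵀ * M + M * A = -1 := by
  obtain ⟨c₁, hc₁, b₁, hb₁, hdec₁⟩ := decay A hA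
  have hAT : ∀ μ ∈ spectrum ℂ (Aᵀ.map (Complex.ofReal ·)), μ.re < 0 := by
    intro μ hμ
    apply hA
    rw [Matrix.transpose_map, spectrum_transpose] at hμ
    exact hμ
  obtain ⟨c₂, hc₂, b₂, hb₂, hdec₂⟩ := decay Aᵀ hAT
  set G : ℝ → Matrix (Fin d) (Fin d) ℝ := fun s => exp (s • Aᵀ) * exp (s • A) with hGdef
  set b : ℝ := b₁ + b₂ with hbdef
  have hb : 0 < b := by simp only [hbdef]; linarith
  set cc : ℝ := c₂ * c₁ with hccdef
  have hcc : 0 < cc := mul_pos hc₂ hc₁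
  have hGle : ∀ s : ℝ, 0 ≤ s → ‖G s‖ ≤ cc * Real.exp (-b * s) := by
    intro s hs
    calc ‖G s‖ ≤ ‖exp (s • Aᵀ)‖ * ‖exp (s • A)‖ := norm_mul_le _ _
      _ ≤ (c₂ * Real.exp (-b₂ * s)) * (c₁ * Real.exp (-b₁ * s)) :=
          mul_le_mul (hdec₂ s hs) (hdec₁ s hs) (norm_nonneg _) (by positivity)
      _ = cc * Real.exp (-b * s) := by
          rw [show (c₂ * Real.exp (-b₂ * s)) * (c₁ * Real.exp (-b₁ * s))
              = (c₂ * c₁) * (Real.exp (-b₂ * s) * Real.exp (-b₁ * s)) by ring,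
            ← Real.exp_add, hccdef, hbdef]
          congr 2
          ring
  have hderiv : ∀ s : ℝ, HasDerivAt G (Aᵀ * G s + G s * A) s := by
    intro s
    have h1 : HasDerivAt (fun u : ℝ => exp (u • Aᵀ)) (Aᵀ * exp (s • Aᵀ)) s :=
      hasDerivAt_exp_smul_const' (𝕂 := ℝ) Aᵀ s
    have h2 : HasDerivAt (fun u : ℝ => exp (u • A)) (exp (s • A) * A) s :=
      hasDerivAt_exp_smul_const (𝕂 := ℝ) A s
    have h3 := h1.mul h2
    have h4 : Aᵀ * G s + G s * A
        = Aᵀ * exp (s • Aᵀ) * exp (s • A) + exp (s • Aᵀ) * (exp (s • A) * A) := by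
      simp only [hGdef, mul_assoc]
    rw [h4]
    exact h3
  have hcontG : Continuous G := continuous_iff_continuousAt.mpr fun s => (hderiv s).continuousAt
  -- entry evaluation as a continuous linear map
  have hL : ∀ i j : Fin d, ∃ L : Matrix (Fin d) (Fin d) ℝ →L[ℝ] ℝ,
      ∀ P : Matrix (Fin d) (Fin d) ℝ, L P = P i j := by
    intro i j
    refine ⟨LinearMap.toContinuousLinearMap
      ((LinearMap.proj j).comp (LinearMap.proj (R := ℝ)
        (φ := fun _ : Fin d => Fin d → ℝ) i)), fun P => rfl⟩
  have hd_entry : ∀ (i j : Fin d) (s : ℝ),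
      HasDerivAt (fun s => G s i j) ((Aᵀ * G s + G s * A) i j) s := by
    intro i j s
    obtain ⟨L, hLP⟩ := hL i j
    have := L.hasFDerivAt.comp_hasDerivAt s (hderiv s)
    simp only [Function.comp_def, hLP] at this
    exact (hLP (Aᵀ * G s + G s * A)) ▸ this
  have hcont_entry : ∀ i j : Fin d, Continuous fun s => G s i j := fun i j =>
    continuous_iff_continuousAt.mpr fun s => (hd_entry i j s).continuousAt
  have hcontD : Continuous fun s => Aᵀ * G s + G s * A :=
    (continuous_const.mul hcontG).add (hcontG.mul continuous_const)
  have hcontD_entry : ∀ i j : Fin d, Continuous fun s => (Aᵀ * G s + G s * A) i j := by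
    intro i j
    obtain ⟨L, hLP⟩ := hL i j
    have := L.continuous.comp hcontD
    simpa only [Function.comp_def, hLP] using this
  set CA : ℝ := ‖Aᵀ‖ + ‖A‖ + 1 with hCAdef
  have hCA : 0 < CA := by
    have := norm_nonneg Aᵀ
    have := norm_nonneg A
    simp only [hCAdef]; linarith
  have hDle : ∀ s : ℝ, 0 ≤ s → ‖Aᵀ * G s + G s * A‖ ≤ CA * (cc * Real.exp (-b * s)) := by
    intro s hs
    have h1 : ‖Aᵀ * G s + G s * A‖ ≤ ‖Aᵀ‖ * ‖G s‖ + ‖G s‖ * ‖A‖ :=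
      le_trans (norm_add_le _ _) (add_le_add (norm_mul_le _ _) (norm_mul_le _ _))
    have h2 := hGle s hs
    have h3 : (0:ℝ) ≤ ‖Aᵀ‖ := norm_nonneg _
    have h4 : (0:ℝ) ≤ ‖A‖ := norm_nonneg _
    have h5 : (0:ℝ) ≤ ‖G s‖ := norm_nonneg _
    have h6 : (0:ℝ) < Real.exp (-b * s) := Real.exp_pos _
    simp only [hCAdef]
    nlinarith
  have hexpint : ∀ (k : ℝ), IntegrableOn (fun s => k * Real.exp (-b*s)) (Set.Ioi (0:ℝ)) :=
    fun k => (exp_neg_integrableOn_Ioi 0 hb).const_mul k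
  have hintG : ∀ i j : Fin d, IntegrableOn (fun s => G s i j) (Set.Ioi (0:ℝ)) := by
    intro i j
    apply Integrable.mono' (hexpint cc) (hcont_entry i j).aestronglyMeasurable
    rw [ae_restrict_iff' measurableSet_Ioi]
    refine Filter.Eventually.of_forall fun s hs => ?_
    exact le_trans (entry_le_norm (G s) i j) (hGle s (le_of_lt hs))
  have hintD : ∀ i j : Fin d,
      IntegrableOn (fun s => (Aᵀ * G s + G s * A) i j) (Set.Ioi (0:ℝ)) := by
    intro i j
    apply Integrable.mono' (hexpint (CA * cc)) (hcontD_entry i j).aestronglyMeasurable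
    rw [ae_restrict_iff' measurableSet_Ioi]
    refine Filter.Eventually.of_forall fun s hs => ?_
    refine le_trans (entry_le_norm _ i j) (le_trans (hDle s (le_of_lt hs)) (le_of_eq (by ring)))
  have htendexp : Filter.Tendsto (fun s : ℝ => cc * Real.exp (-b * s)) atTop (𝓝 0) := by
    have h1 : Filter.Tendsto (fun s : ℝ => b * s) atTop atTop :=
      Filter.Tendsto.const_mul_atTop hb Filter.tendsto_id
    have h2 := Real.tendsto_exp_neg_atTop_nhds_zero.comp h1
    have h3 := h2.const_mul cc
    simpa [neg_mul, Function.comp_def] using h3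
  have htend : ∀ i j : Fin d, Filter.Tendsto (fun s => G s i j) atTop (𝓝 0) := by
    intro i j
    apply squeeze_zero_norm' _ htendexp
    refine (Filter.eventually_ge_atTop (0:ℝ)).mono fun s hs => ?_
    exact le_trans (entry_le_norm (G s) i j) (hGle s hs)
  have hG0 : G 0 = 1 := by
    simp only [hGdef, zero_smul, exp_zero, one_mul]
  have key : ∀ i j : Fin d,
      ∫ s in Set.Ioi (0:ℝ), (Aᵀ * G s + G s * A) i j = -(1 : Matrix (Fin d) (Fin d) ℝ) i j := by
    intro i j
    have h := integral_Ioi_of_hasDerivAt_of_tendsto' (a := 0)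
      (fun s _ => hd_entry i j s) (hintD i j) (htend i j)
    rw [h, hG0]
    simp
  ext i j
  have e1 : (Aᵀ * M) i j = ∫ s in Set.Ioi (0:ℝ), (Aᵀ * G s) i j := by
    rw [Matrix.mul_apply]
    have h1 : ∀ k, Aᵀ i k * M k j = ∫ s in Set.Ioi (0:ℝ), Aᵀ i k * G s k j := by
      intro k
      rw [hM k j, ← integral_const_mul]
    rw [Finset.sum_congr rfl (fun k _ => h1 k), ← integral_finset_sum]
    · congr 1
    · exact fun k _ => (hintG k j).const_mul _
  have e2 : (M * A) i j = ∫ s in Set.Ioi (0:ℝ), (G s * A) i j := by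
    rw [Matrix.mul_apply]
    have h1 : ∀ k, M i k * A k j = ∫ s in Set.Ioi (0:ℝ), G s i k * A k j := by
      intro k
      rw [hM i k, ← integral_mul_const]
    rw [Finset.sum_congr rfl (fun k _ => h1 k), ← integral_finset_sum]
    · congr 1
    · exact fun k _ => (hintG i k).mul_const _
  have hintAG : IntegrableOn (fun s => (Aᵀ * G s) i j) (Set.Ioi (0:ℝ)) := by
    have heq : (fun s => (Aᵀ * G s) i j) = fun s => ∑ k, Aᵀ i k * G s k j := by
      funext s
      rw [Matrix.mul_apply]
    rw [heq]
    exact integrable_finset_sum _ fun k _ => (hintG k j).const_mul _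
  have hintGA : IntegrableOn (fun s => (G s * A) i j) (Set.Ioi (0:ℝ)) := by
    have heq : (fun s => (G s * A) i j) = fun s => ∑ k, G s i k * A k j := by
      funext s
      rw [Matrix.mul_apply]
    rw [heq]
    exact integrable_finset_sum _ fun k _ => (hintG i k).mul_const _
  calc (Aᵀ * M + M * A) i j
      = (∫ s in Set.Ioi (0:ℝ), (Aᵀ * G s) i j) + ∫ s in Set.Ioi (0:ℝ), (G s * A) i j := by
        rw [Matrix.add_apply, e1, e2]
    _ = ∫ s in Set.Ioi (0:ℝ), ((Aᵀ * G s) i j + (G s * A) i j) := (integral_add hintAG hintGA).symm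
    _ = ∫ s in Set.Ioi (0:ℝ), (Aᵀ * G s + G s * A) i j := by
        congr 1
    _ = -(1 : Matrix (Fin d) (Fin d) ℝ) i j := key i j

end Stmt2Aux

/-- With `A` Hurwitz, `M = ∫₀^∞ e^{sAᵀ} e^{sA} ds`, and `F` continuous with
`|F x| ≤ C (1 + |x|)^a` for some `a ∈ [0,1)`, there is `c₂ > 0` such that
`2 ⟨M x, A x + F x⟩ ≤ -(1/2)|x|² + c₂` for all `x`. -/
theorem stmt2 {d : ℕ} (A : Matrix (Fin d) (Fin d) ℝ)
    (hA : ∀ μ ∈ spectrum ℂ (A.map (Complex.ofReal ·)), μ.re < 0)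
    (M : Matrix (Fin d) (Fin d) ℝ)
    (hM : ∀ i j : Fin d,
      M i j = ∫ s in Set.Ioi (0 : ℝ),
        (NormedSpace.exp (s • Aᵀ) * NormedSpace.exp (s • A)) i j)
    (F : (Fin d → ℝ) → Fin d → ℝ) (hFc : Continuous F)
    (a : ℝ) (ha0 : 0 ≤ a) (ha1 : a < 1) (C : ℝ)
    (hFg : ∀ x : Fin d → ℝ,
      Real.sqrt (F x ⬝ᵥ F x) ≤ C * (1 + Real.sqrt (x ⬝ᵥ x)) ^ a) :
    ∃ c₂ > (0 : ℝ), ∀ x : Fin d → ℝ,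
      2 * (M.mulVec x ⬝ᵥ (A.mulVec x + F x)) ≤ -(1/2) * (x ⬝ᵥ x) + c₂ := by
  classical
  have hdnn : ∀ v : Fin d → ℝ, 0 ≤ v ⬝ᵥ v := fun v =>
    Finset.sum_nonneg fun i _ => mul_self_nonneg _
  have hlyap : Aᵀ * M + M * A = -1 := Stmt2Aux.lyap A M hA hM
  -- symmetry of M
  have hMsym : Mᵀ = M := by
    have h1 : ∀ s : ℝ, NormedSpace.exp (s • Aᵀ) = (NormedSpace.exp (s • A))ᵀ := by
      intro s
      rw [← Matrix.transpose_smul, Matrix.exp_transpose]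
    ext i j
    rw [Matrix.transpose_apply, hM j i, hM i j]
    congr 1
    funext s
    rw [h1, Matrix.mul_apply, Matrix.mul_apply]
    simp only [Matrix.transpose_apply]
    exact Finset.sum_congr rfl fun k _ => mul_comm _ _
  -- quadratic identity
  have hquad : ∀ x : Fin d → ℝ, 2 * (M.mulVec x ⬝ᵥ A.mulVec x) = -(x ⬝ᵥ x) := by
    intro x
    have h0 : x ⬝ᵥ (Aᵀ * M + M * A).mulVec x = x ⬝ᵥ (-1 : Matrix (Fin d) (Fin d) ℝ).mulVec x := by
      rw [hlyap]
    rw [Matrix.add_mulVec, dotProduct_add, Matrix.neg_mulVec, Matrix.one_mulVec,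
      dotProduct_neg] at h0
    have ht1 : x ⬝ᵥ (Aᵀ * M).mulVec x = M.mulVec x ⬝ᵥ A.mulVec x := by
      rw [← Matrix.mulVec_mulVec, dotProduct_mulVec, Matrix.vecMul_transpose,
        dotProduct_comm]
    have ht2 : x ⬝ᵥ (M * A).mulVec x = M.mulVec x ⬝ᵥ A.mulVec x := by
      rw [← Matrix.mulVec_mulVec, dotProduct_mulVec, ← Matrix.mulVec_transpose, hMsym]
    rw [ht1, ht2] at h0
    linarith
  -- Cauchy-Schwarz for dot products
  have hCS : ∀ u v : Fin d → ℝ, u ⬝ᵥ v ≤ Real.sqrt (u ⬝ᵥ u) * Real.sqrt (v ⬝ᵥ v) := by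
    intro u v
    have h1 : (u ⬝ᵥ v) ^ 2 ≤ (u ⬝ᵥ u) * (v ⬝ᵥ v) := by
      have := Finset.sum_mul_sq_le_sq_mul_sq Finset.univ u v
      simp only [dotProduct]
      calc (∑ i, u i * v i) ^ 2 ≤ (∑ i, u i ^ 2) * ∑ i, v i ^ 2 := this
        _ = (∑ i, u i * u i) * ∑ i, v i * v i := by simp [sq]
    calc u ⬝ᵥ v ≤ |u ⬝ᵥ v| := le_abs_self _
      _ = Real.sqrt ((u ⬝ᵥ v) ^ 2) := (Real.sqrt_sq_eq_abs _).symm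
      _ ≤ Real.sqrt ((u ⬝ᵥ u) * (v ⬝ᵥ v)) := Real.sqrt_le_sqrt h1
      _ = Real.sqrt (u ⬝ᵥ u) * Real.sqrt (v ⬝ᵥ v) := Real.sqrt_mul (hdnn u) _
  -- bound ‖Mx‖ by Frobenius constant
  set K : ℝ := ∑ i, ∑ j, (M i j) ^ 2 with hKdef
  have hKnn : 0 ≤ K :=
    Finset.sum_nonneg fun i _ => Finset.sum_nonneg fun j _ => sq_nonneg _
  have hMxb : ∀ x : Fin d → ℝ, (M.mulVec x) ⬝ᵥ (M.mulVec x) ≤ K * (x ⬝ᵥ x) := by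
    intro x
    have hrow : ∀ i : Fin d, (M.mulVec x i) * (M.mulVec x i)
        ≤ (∑ j, (M i j) ^ 2) * (x ⬝ᵥ x) := by
      intro i
      have h1 : M.mulVec x i = ∑ j, M i j * x j := rfl
      have h2 := Finset.sum_mul_sq_le_sq_mul_sq Finset.univ (fun j => M i j) x
      rw [h1, ← sq]
      calc (∑ j, M i j * x j) ^ 2 ≤ (∑ j, (M i j) ^ 2) * ∑ j, (x j) ^ 2 := h2
        _ = (∑ j, (M i j) ^ 2) * (x ⬝ᵥ x) := by
            congr 1
            simp [dotProduct, sq]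
    calc (M.mulVec x) ⬝ᵥ (M.mulVec x) = ∑ i, (M.mulVec x i) * (M.mulVec x i) := rfl
      _ ≤ ∑ i, (∑ j, (M i j) ^ 2) * (x ⬝ᵥ x) := Finset.sum_le_sum fun i _ => hrow i
      _ = K * (x ⬝ᵥ x) := by rw [hKdef, Finset.sum_mul]
  -- C is nonnegative
  have hC0 : 0 ≤ C := by
    have h := hFg 0
    have h0 : (0 : Fin d → ℝ) ⬝ᵥ (0 : Fin d → ℝ) = 0 := by simp [dotProduct]
    rw [h0, Real.sqrt_zero, add_zero, Real.one_rpow, mul_one] at h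
    exact le_trans (Real.sqrt_nonneg _) h
  obtain ⟨c₂, hc₂, hgrow⟩ := Stmt2Aux.growth (2 * (Real.sqrt K * C))
    (by positivity) a ha0 ha1
  refine ⟨c₂, hc₂, fun x => ?_⟩
  set t : ℝ := Real.sqrt (x ⬝ᵥ x) with htdef
  have ht0 : 0 ≤ t := Real.sqrt_nonneg _
  have ht2 : t ^ 2 = x ⬝ᵥ x := Real.sq_sqrt (hdnn x)
  have hbound : M.mulVec x ⬝ᵥ F x ≤ (Real.sqrt K * t) * (C * (1 + t) ^ a) := by
    have h1 := hCS (M.mulVec x) (F x)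
    have h2 : Real.sqrt ((M.mulVec x) ⬝ᵥ (M.mulVec x)) ≤ Real.sqrt K * t := by
      calc Real.sqrt ((M.mulVec x) ⬝ᵥ (M.mulVec x)) ≤ Real.sqrt (K * (x ⬝ᵥ x)) :=
            Real.sqrt_le_sqrt (hMxb x)
        _ = Real.sqrt K * t := Real.sqrt_mul hKnn _
    have h3 := hFg x
    calc M.mulVec x ⬝ᵥ F x
        ≤ Real.sqrt ((M.mulVec x) ⬝ᵥ (M.mulVec x)) * Real.sqrt (F x ⬝ᵥ F x) := h1
      _ ≤ (Real.sqrt K * t) * (C * (1 + t) ^ a) := by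
          apply mul_le_mul h2 h3 (Real.sqrt_nonneg _)
          positivity
  have hgr := hgrow t ht0
  have hexpand : 2 * (M.mulVec x ⬝ᵥ (A.mulVec x + F x))
      = 2 * (M.mulVec x ⬝ᵥ A.mulVec x) + 2 * (M.mulVec x ⬝ᵥ F x) := by
    rw [dotProduct_add]
    ring
  rw [hexpand, hquad x]
  have h2b : 2 * (M.mulVec x ⬝ᵥ F x) ≤ 2 * (Real.sqrt K * C) * (t * (1 + t) ^ a) := by
    have := mul_le_mul_of_nonneg_left hbound (by norm_num : (0:ℝ) ≤ 2)
    calc 2 * (M.mulVec x ⬝ᵥ F x) ≤ 2 * ((Real.sqrt K * t) * (C * (1 + t) ^ a)) := this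
      _ = 2 * (Real.sqrt K * C) * (t * (1 + t) ^ a) := by ring
  have h3b : 2 * (Real.sqrt K * C) * (t * (1 + t) ^ a) ≤ (1/2) * t ^ 2 + c₂ := hgr
  rw [← ht2]
  linarith
end

section
/- Let A be a real d×d matrix, B a real d×n matrix, and F : ℝ^d → ℝ^d a globally Lipschitz continuous map. Then for every T > 0, every initial condition x_in ∈ ℝ^d and every continuous η : [0,T] → ℝ^n with η(0) = 0, there exists a unique continuous curve x : [0,T] → ℝ^d satisfying the integral equation x(t) = x_in + ∫₀^t (A x(s) + F(x(s))) ds + B η(t) for all t ∈ [0,T]. Moreover, for each fixed t ∈ [0,T], the solution map (x_in, η) ↦ x(t) is jointly continuous from ℝ^d × C₀([0,T];ℝ^n) (the latter equipped with the supremum norm) to ℝ^d. -/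
open Matrix MeasureTheory

/-- Euclidean norm on `Fin d → ℝ`. -/
noncomputable def eNorm {d : ℕ} (x : Fin d → ℝ) : ℝ := Real.sqrt (x ⬝ᵥ x)

section Aux

open Set intervalIntegral Function

lemma eNorm_eq {d : ℕ} (x : Fin d → ℝ) : eNorm x = Real.sqrt (∑ i, x i * x i) := rfl

lemma norm_le_eNorm {d : ℕ} (x : Fin d → ℝ) : ‖x‖ ≤ eNorm x := by
  rw [eNorm_eq]
  refine (pi_norm_le_iff_of_nonneg (Real.sqrt_nonneg _)).2 fun i => ?_
  rw [Real.norm_eq_abs, ← Real.sqrt_sq_eq_abs, sq]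
  exact Real.sqrt_le_sqrt (Finset.single_le_sum (f := fun j => x j * x j)
    (fun j _ => mul_self_nonneg _) (Finset.mem_univ i))

lemma eNorm_le {d : ℕ} (x : Fin d → ℝ) : eNorm x ≤ Real.sqrt d * ‖x‖ := by
  rw [eNorm_eq, ← Real.sqrt_sq (norm_nonneg x), ← Real.sqrt_mul (by positivity)]
  refine Real.sqrt_le_sqrt ?_
  calc ∑ i, x i * x i ≤ ∑ _i : Fin d, ‖x‖ ^ 2 := by
        refine Finset.sum_le_sum fun i _ => ?_
        rw [← abs_mul_abs_self, ← Real.norm_eq_abs, sq]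
        exact mul_le_mul (norm_le_pi_norm x i) (norm_le_pi_norm x i) (norm_nonneg _) (norm_nonneg _)
    _ = (d : ℝ) * ‖x‖ ^ 2 := by simp [Finset.sum_const, nsmul_eq_mul]

variable {E : Type*} [NormedAddCommGroup E] [NormedSpace ℝ E] [CompleteSpace E]

lemma exists_sol {G : E → E} {K : ℝ} (hK : 0 < K)
    (hG : ∀ a b : E, ‖G a - G b‖ ≤ K * ‖a - b‖)
    {c : ℝ → E} (hc : Continuous c) {T : ℝ} (hT : 0 < T) :
    ∃ x : ℝ → E, Continuous x ∧ ∀ t ∈ Set.Icc (0:ℝ) T,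
      x t = c t + ∫ s in (0:ℝ)..t, G (x s) := by
  have hGlip : LipschitzWith K.toNNReal G := by
    refine LipschitzWith.of_dist_le_mul fun a b => ?_
    rw [dist_eq_norm, dist_eq_norm, Real.coe_toNNReal _ hK.le]
    exact hG a b
  have hGc : Continuous G := hGlip.continuous
  set X := C(Set.Icc (0:ℝ) T, E) with hX
  haveI : CompactSpace (Set.Icc (0:ℝ) T) := isCompact_iff_compactSpace.mp isCompact_Icc
  haveI : Nonempty X := ⟨ContinuousMap.const _ 0⟩
  set ext : X → ℝ → E := fun u s => u (Set.projIcc 0 T hT.le s) with hext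
  have ext_cont : ∀ u : X, Continuous (ext u) := fun u =>
    u.continuous.comp continuous_projIcc
  have ext_eq : ∀ (u : X) (s : ℝ) (hs : s ∈ Set.Icc (0:ℝ) T), ext u s = u ⟨s, hs⟩ := by
    intro u s hs
    simp [hext, Set.projIcc_of_mem hT.le hs]
  set Φ : X → X := fun u =>
    ⟨fun t => c t + ∫ s in (0:ℝ)..(t:ℝ), G (ext u s), by
      have h1 : Continuous fun t : ℝ => c t + ∫ s in (0:ℝ)..t, G (ext u s) :=
        hc.add (intervalIntegral.continuous_primitive
          (fun a b => ((hGc.comp (ext_cont u)).intervalIntegrable a b)) 0)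
      exact h1.comp continuous_subtype_val⟩ with hΦ
  have Φ_apply : ∀ (u : X) (t : ℝ) (ht : t ∈ Set.Icc (0:ℝ) T),
      (Φ u) ⟨t, ht⟩ = c t + ∫ s in (0:ℝ)..t, G (ext u s) := fun u t ht => rfl
  -- iterate estimate
  have key : ∀ (u v : X) (m : ℕ), ∀ t ∈ Set.Icc (0:ℝ) T,
      ‖ext (Φ^[m] u) t - ext (Φ^[m] v) t‖ ≤ K ^ m * t ^ m / m.factorial * dist u v := by
    intro u v m
    induction m with
    | zero =>
      intro t ht
      simp only [iterate_zero, id_eq, pow_zero, Nat.factorial_zero, Nat.cast_one]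
      rw [ext_eq u t ht, ext_eq v t ht, ← dist_eq_norm]
      simpa using ContinuousMap.dist_apply_le_dist (⟨t, ht⟩ : Set.Icc (0:ℝ) T)
    | succ m ih =>
      intro t ht
      obtain ⟨ht0, htT⟩ := ht
      have hU := ext_cont (Φ^[m] u); have hV := ext_cont (Φ^[m] v)
      have hint1 : IntervalIntegrable (fun s => G (ext (Φ^[m] u) s)) volume 0 t :=
        (hGc.comp hU).intervalIntegrable _ _
      have hint2 : IntervalIntegrable (fun s => G (ext (Φ^[m] v) s)) volume 0 t :=
        (hGc.comp hV).intervalIntegrable _ _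
      have e1 : ext (Φ^[m+1] u) t - ext (Φ^[m+1] v) t
          = ∫ s in (0:ℝ)..t, (G (ext (Φ^[m] u) s) - G (ext (Φ^[m] v) s)) := by
        rw [ext_eq _ t (show t ∈ Set.Icc (0:ℝ) T from ⟨ht0, htT⟩),
          ext_eq _ t (show t ∈ Set.Icc (0:ℝ) T from ⟨ht0, htT⟩), iterate_succ_apply',
          iterate_succ_apply', Φ_apply, Φ_apply, intervalIntegral.integral_sub hint1 hint2]
        abel
      rw [e1]
      calc ‖∫ s in (0:ℝ)..t, (G (ext (Φ^[m] u) s) - G (ext (Φ^[m] v) s))‖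
          ≤ ∫ s in (0:ℝ)..t, ‖G (ext (Φ^[m] u) s) - G (ext (Φ^[m] v) s)‖ :=
            intervalIntegral.norm_integral_le_integral_norm ht0
        _ ≤ ∫ s in (0:ℝ)..t, K * (K ^ m * s ^ m / m.factorial * dist u v) := by
            have hi1 : IntervalIntegrable
                (fun s => ‖G (ext (Φ^[m] u) s) - G (ext (Φ^[m] v) s)‖) volume 0 t :=
              Continuous.intervalIntegrable (by fun_prop) 0 t
            have hi2 : IntervalIntegrable
                (fun s : ℝ => K * (K ^ m * s ^ m / m.factorial * dist u v)) volume 0 t :=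
              Continuous.intervalIntegrable (by fun_prop) 0 t
            refine intervalIntegral.integral_mono_on ht0 hi1 hi2 fun s hs => ?_
            have hs' : s ∈ Set.Icc (0:ℝ) T := ⟨hs.1, hs.2.trans htT⟩
            calc ‖G (ext (Φ^[m] u) s) - G (ext (Φ^[m] v) s)‖
                ≤ K * ‖ext (Φ^[m] u) s - ext (Φ^[m] v) s‖ := hG _ _
              _ ≤ K * (K ^ m * s ^ m / m.factorial * dist u v) :=
                  mul_le_mul_of_nonneg_left (ih s hs') hK.le
        _ = K ^ (m+1) * t ^ (m+1) / (m+1).factorial * dist u v := by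
            rw [intervalIntegral.integral_const_mul]
            have : ∀ s : ℝ, K ^ m * s ^ m / m.factorial * dist u v
                = (K ^ m / m.factorial * dist u v) * s ^ m := by intro s; ring
            simp_rw [this]
            rw [intervalIntegral.integral_const_mul, integral_pow]
            have hm : (m.factorial : ℝ) ≠ 0 := Nat.cast_ne_zero.2 m.factorial_ne_zero
            have hm1 : ((m:ℝ) + 1) ≠ 0 := by positivity
            rw [Nat.factorial_succ]
            push_cast
            field_simp
            ring
  -- contraction
  obtain ⟨m, hm⟩ : ∃ m : ℕ, K ^ m * T ^ m / m.factorial < 1 := by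
    have := FloorSemiring.tendsto_pow_div_factorial_atTop (K * T)
    have h2 := this.eventually (gt_mem_nhds one_pos)
    obtain ⟨m, hm⟩ := h2.exists
    exact ⟨m, by rwa [mul_pow] at hm⟩
  have hpos : (0:ℝ) ≤ K ^ m * T ^ m / m.factorial := by positivity
  have hlip : LipschitzWith (K ^ m * T ^ m / m.factorial).toNNReal (Φ^[m]) := by
    refine LipschitzWith.of_dist_le_mul fun u v => ?_
    rw [Real.coe_toNNReal _ hpos]
    refine (ContinuousMap.dist_le (by positivity)).2 fun a => ?_
    obtain ⟨t, ht⟩ := a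
    rw [dist_eq_norm]
    have := key u v m t ht
    rw [ext_eq _ t ht, ext_eq _ t ht] at this
    refine this.trans ?_
    have : K ^ m * t ^ m / m.factorial * dist u v ≤ K ^ m * T ^ m / m.factorial * dist u v := by
      have : t ^ m ≤ T ^ m := pow_le_pow_left₀ ht.1 ht.2 m
      have hd := dist_nonneg (x := u) (y := v)
      have hfac : (0:ℝ) < m.factorial := by positivity
      gcongr
    linarith
  have hcontr : ContractingWith (K ^ m * T ^ m / m.factorial).toNNReal (Φ^[m]) :=
    ⟨by rwa [← Real.toNNReal_one, Real.toNNReal_lt_toNNReal_iff one_pos], hlip⟩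
  set x₀ := hcontr.fixedPoint with hx₀
  have hfix : Function.IsFixedPt (Φ^[m]) x₀ := hcontr.fixedPoint_isFixedPt
  have hfixΦ : Φ x₀ = x₀ := by
    have h1 : Function.IsFixedPt (Φ^[m]) (Φ x₀) := by
      show Φ^[m] (Φ x₀) = Φ x₀
      rw [← iterate_succ_apply, iterate_succ_apply', hfix]
    exact (hcontr.fixedPoint_unique' h1 hfix)
  refine ⟨ext x₀, ext_cont x₀, fun t ht => ?_⟩
  conv_lhs => rw [ext_eq x₀ t ht, ← hfixΦ]
  exact Φ_apply x₀ t ht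

lemma gron {G : E → E} {K : ℝ} (hK : 0 < K)
    (hG : ∀ a b : E, ‖G a - G b‖ ≤ K * ‖a - b‖)
    {T : ℝ} (hT : 0 < T) {x y : ℝ → E}
    (hx : ContinuousOn x (Set.Icc 0 T)) (hy : ContinuousOn y (Set.Icc 0 T))
    {a : ℝ → E} {δ : ℝ} (ha : ∀ t ∈ Set.Icc (0:ℝ) T, ‖a t‖ ≤ δ)
    (heq : ∀ t ∈ Set.Icc (0:ℝ) T,
      x t - y t = a t + ∫ s in (0:ℝ)..t, (G (x s) - G (y s))) :
    ∀ t ∈ Set.Icc (0:ℝ) T, ‖x t - y t‖ ≤ δ * Real.exp (K * T) + δ := by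
  have hGc : Continuous G := by
    refine (LipschitzWith.of_dist_le_mul (K := K.toNNReal) fun p q => ?_).continuous
    rw [dist_eq_norm, dist_eq_norm, Real.coe_toNNReal _ hK.le]
    exact hG p q
  have hδ : 0 ≤ δ := le_trans (norm_nonneg _) (ha 0 ⟨le_refl _, hT.le⟩)
  set xt : ℝ → E := fun s => x ↑(Set.projIcc 0 T hT.le s) with hxt
  set yt : ℝ → E := fun s => y ↑(Set.projIcc 0 T hT.le s) with hyt
  have hxtc : Continuous xt := hx.comp_continuous
    (continuous_subtype_val.comp continuous_projIcc) (fun s => (Set.projIcc 0 T hT.le s).2)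
  have hytc : Continuous yt := hy.comp_continuous
    (continuous_subtype_val.comp continuous_projIcc) (fun s => (Set.projIcc 0 T hT.le s).2)
  have hxt_eq : ∀ s ∈ Set.Icc (0:ℝ) T, xt s = x s := by
    intro s hs; simp [hxt, Set.projIcc_of_mem hT.le hs]
  have hyt_eq : ∀ s ∈ Set.Icc (0:ℝ) T, yt s = y s := by
    intro s hs; simp [hyt, Set.projIcc_of_mem hT.le hs]
  set h : ℝ → E := fun s => G (xt s) - G (yt s) with hh
  have hhc : Continuous h := (hGc.comp hxtc).sub (hGc.comp hytc)
  set f : ℝ → E := fun t => ∫ s in (0:ℝ)..t, h s with hf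
  have hfc : Continuous f := intervalIntegral.continuous_primitive
    (fun a b => hhc.intervalIntegrable a b) 0
  have hfeq : ∀ t ∈ Set.Icc (0:ℝ) T, x t - y t = a t + f t := by
    intro t ht
    rw [heq t ht, hf]
    congr 1
    refine intervalIntegral.integral_congr fun s hs => ?_
    have hs' : s ∈ Set.Icc (0:ℝ) T := by
      rw [Set.uIcc_of_le ht.1] at hs
      exact ⟨hs.1, hs.2.trans ht.2⟩
    simp [hh, hxt_eq s hs', hyt_eq s hs']
  have hbound : ∀ t ∈ Set.Ico (0:ℝ) T, ‖h t‖ ≤ K * ‖f t‖ + K * δ := by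
    intro t ht
    have ht' : t ∈ Set.Icc (0:ℝ) T := ⟨ht.1, ht.2.le⟩
    calc ‖h t‖ = ‖G (x t) - G (y t)‖ := by rw [hh]; simp [hxt_eq t ht', hyt_eq t ht']
      _ ≤ K * ‖x t - y t‖ := hG _ _
      _ = K * ‖a t + f t‖ := by rw [hfeq t ht']
      _ ≤ K * (‖a t‖ + ‖f t‖) := mul_le_mul_of_nonneg_left (norm_add_le _ _) hK.le
      _ ≤ K * (δ + ‖f t‖) := by
          have := ha t ht'
          nlinarith [norm_nonneg (f t)]
      _ = K * ‖f t‖ + K * δ := by ring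
  have hgron := norm_le_gronwallBound_of_norm_deriv_right_le (f := f) (f' := h)
    (δ := 0) (K := K) (ε := K * δ) (a := 0) (b := T) hfc.continuousOn
    (fun t _ => ((hhc.integral_hasStrictDerivAt 0 t).hasDerivAt).hasDerivWithinAt)
    (by simp [hf]) hbound
  intro t ht
  have h1 : ‖f t‖ ≤ gronwallBound 0 K (K * δ) (t - 0) := hgron t ht
  rw [gronwallBound_of_K_ne_0 hK.ne', sub_zero] at h1
  have h2 : K * δ / K * (Real.exp (K * t) - 1) ≤ δ * Real.exp (K * T) := by
    have hKδ : K * δ / K = δ := by field_simp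
    rw [hKδ]
    have he : Real.exp (K * t) ≤ Real.exp (K * T) :=
      Real.exp_le_exp.2 (by nlinarith [ht.2, hK.le])
    nlinarith [Real.exp_pos (K * t), Real.exp_pos (K * T)]
  rw [hfeq t ht]
  calc ‖a t + f t‖ ≤ ‖a t‖ + ‖f t‖ := norm_add_le _ _
    _ ≤ δ * Real.exp (K * T) + δ := by
        have := ha t ht
        simp only [zero_mul, zero_add] at h1
        linarith

end Aux

/-- `x` is a solution on `[0,T]` of the integral equation
`x(t) = x_in + ∫₀^t (A x(s) + F(x(s))) ds + B η(t)`. -/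
def IsSol {d n : ℕ} (A : Matrix (Fin d) (Fin d) ℝ) (B : Matrix (Fin d) (Fin n) ℝ)
    (F : (Fin d → ℝ) → Fin d → ℝ) (T : ℝ) (xin : Fin d → ℝ) (η : ℝ → Fin n → ℝ)
    (x : ℝ → Fin d → ℝ) : Prop :=
  ContinuousOn x (Set.Icc 0 T) ∧
  ∀ t ∈ Set.Icc (0:ℝ) T,
    x t = xin + (∫ s in (0:ℝ)..t, (A.mulVec (x s) + F (x s))) + B.mulVec (η t)

set_option maxHeartbeats 1600000 in
/-- For globally Lipschitz `F`, the integral equation has a unique continuous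
solution on `[0,T]` for every initial condition and every continuous control `η` with `η 0 = 0`;
moreover, for fixed `t ∈ [0,T]` the solution map `(x_in, η) ↦ x(t)` is jointly continuous
(w.r.t. the Euclidean norm on `ℝ^d` and the supremum norm on controls). -/
theorem stmt4 {d n : ℕ} (A : Matrix (Fin d) (Fin d) ℝ) (B : Matrix (Fin d) (Fin n) ℝ)
    (F : (Fin d → ℝ) → Fin d → ℝ)
    (hFlip : ∃ L ≥ (0:ℝ), ∀ x y : Fin d → ℝ, eNorm (F x - F y) ≤ L * eNorm (x - y)) :
    ∀ T > (0:ℝ),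
      (∀ (xin : Fin d → ℝ) (η : ℝ → Fin n → ℝ),
        ContinuousOn η (Set.Icc 0 T) → η 0 = 0 →
          (∃ x : ℝ → Fin d → ℝ, IsSol A B F T xin η x) ∧
          (∀ x y : ℝ → Fin d → ℝ,
            IsSol A B F T xin η x → IsSol A B F T xin η y → Set.EqOn x y (Set.Icc 0 T))) ∧
      (∀ t ∈ Set.Icc (0:ℝ) T,
        ∀ (xin : Fin d → ℝ) (η : ℝ → Fin n → ℝ) (x : ℝ → Fin d → ℝ),
          ContinuousOn η (Set.Icc 0 T) → η 0 = 0 → IsSol A B F T xin η x →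
          ∀ ε > (0:ℝ), ∃ δ > (0:ℝ),
            ∀ (xin' : Fin d → ℝ) (η' : ℝ → Fin n → ℝ) (x' : ℝ → Fin d → ℝ),
              ContinuousOn η' (Set.Icc 0 T) → η' 0 = 0 → IsSol A B F T xin' η' x' →
              eNorm (xin - xin') < δ →
              (∀ s ∈ Set.Icc (0:ℝ) T, eNorm (η s - η' s) < δ) →
              eNorm (x t - x' t) < ε) := by
  obtain ⟨L, hL0, hF⟩ := hFlip
  set CAmap := LinearMap.toContinuousLinearMap (Matrix.mulVecLin A) with hCAmap
  set CBmap := LinearMap.toContinuousLinearMap (Matrix.mulVecLin B) with hCBmap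
  have hCAcoe : ∀ v, CAmap v = A.mulVec v := fun v => by
    rw [hCAmap, LinearMap.coe_toContinuousLinearMap', Matrix.mulVecLin_apply]
  have hCBcoe : ∀ w, CBmap w = B.mulVec w := fun w => by
    rw [hCBmap, LinearMap.coe_toContinuousLinearMap', Matrix.mulVecLin_apply]
  set CA := ‖CAmap‖ with hCA
  set CB := ‖CBmap‖ with hCB
  have hCA0 : 0 ≤ CA := norm_nonneg _
  have hCB0 : 0 ≤ CB := norm_nonneg _
  have hAv : ∀ v, ‖A.mulVec v‖ ≤ CA * ‖v‖ := fun v => by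
    rw [← hCAcoe]; exact CAmap.le_opNorm v
  have hBw : ∀ w, ‖B.mulVec w‖ ≤ CB * ‖w‖ := fun w => by
    rw [← hCBcoe]; exact CBmap.le_opNorm w
  have hAc : Continuous fun v : Fin d → ℝ => A.mulVec v := by
    have he : (fun v : Fin d → ℝ => A.mulVec v) = ⇑CAmap := by
      funext v; rw [hCAcoe]
    rw [he]; exact CAmap.continuous
  have hFlipSup : ∀ a b : Fin d → ℝ, ‖F a - F b‖ ≤ L * Real.sqrt d * ‖a - b‖ := by
    intro a b
    calc ‖F a - F b‖ ≤ eNorm (F a - F b) := norm_le_eNorm _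
      _ ≤ L * eNorm (a - b) := hF a b
      _ ≤ L * (Real.sqrt d * ‖a - b‖) :=
          mul_le_mul_of_nonneg_left (eNorm_le _) hL0
      _ = L * Real.sqrt d * ‖a - b‖ := by ring
  have hFc : Continuous F := by
    refine (LipschitzWith.of_dist_le_mul (K := (L * Real.sqrt d).toNNReal) fun p q => ?_).continuous
    rw [dist_eq_norm, dist_eq_norm, Real.coe_toNNReal _ (by positivity)]
    exact hFlipSup p q
  set K := CA + L * Real.sqrt d + 1 with hKdef
  have hK : 0 < K := by positivity
  set G : (Fin d → ℝ) → Fin d → ℝ := fun v => A.mulVec v + F v with hGdef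
  have hGs : ∀ v, G v = A.mulVec v + F v := fun _ => rfl
  have hGc : Continuous G := hAc.add hFc
  have hGlip : ∀ a b : Fin d → ℝ, ‖G a - G b‖ ≤ K * ‖a - b‖ := by
    intro a b
    have h1 : G a - G b = A.mulVec (a - b) + (F a - F b) := by
      rw [hGs, hGs, Matrix.mulVec_sub]; abel
    rw [h1]
    calc ‖A.mulVec (a - b) + (F a - F b)‖ ≤ ‖A.mulVec (a - b)‖ + ‖F a - F b‖ := norm_add_le _ _
      _ ≤ CA * ‖a - b‖ + L * Real.sqrt d * ‖a - b‖ := add_le_add (hAv _) (hFlipSup a b)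
      _ ≤ K * ‖a - b‖ := by
          rw [hKdef]
          have := norm_nonneg (a - b)
          nlinarith
  intro T hT
  -- integrability of G ∘ x for a solution
  have hint : ∀ (x : ℝ → Fin d → ℝ), ContinuousOn x (Set.Icc 0 T) →
      ∀ t ∈ Set.Icc (0:ℝ) T, IntervalIntegrable (fun s => G (x s)) volume 0 t := by
    intro x hx t ht
    apply ContinuousOn.intervalIntegrable
    have hss : Set.uIcc (0:ℝ) t ⊆ Set.Icc 0 T := by
      rw [Set.uIcc_of_le ht.1]; exact Set.Icc_subset_Icc le_rfl ht.2
    exact hGc.comp_continuousOn (hx.mono hss)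
  -- subtracting two solution equations
  have hsub : ∀ (xin xin' : Fin d → ℝ) (η η' : ℝ → Fin n → ℝ) (x x' : ℝ → Fin d → ℝ),
      IsSol A B F T xin η x → IsSol A B F T xin' η' x' →
      ∀ t ∈ Set.Icc (0:ℝ) T,
        x t - x' t = ((xin - xin') + B.mulVec (η t - η' t)) +
          ∫ s in (0:ℝ)..t, (G (x s) - G (x' s)) := by
    intro xin xin' η η' x x' hxs hxs' t ht
    have e1 := hxs.2 t ht
    have e2 := hxs'.2 t ht
    have e3 : (∫ s in (0:ℝ)..t, (G (x s) - G (x' s)))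
        = (∫ s in (0:ℝ)..t, G (x s)) - ∫ s in (0:ℝ)..t, G (x' s) :=
      intervalIntegral.integral_sub (hint x hxs.1 t ht) (hint x' hxs'.1 t ht)
    have e4 : (∫ s in (0:ℝ)..t, G (x s))
        = ∫ s in (0:ℝ)..t, (A.mulVec (x s) + F (x s)) := rfl
    have e5 : (∫ s in (0:ℝ)..t, G (x' s))
        = ∫ s in (0:ℝ)..t, (A.mulVec (x' s) + F (x' s)) := rfl
    rw [e3, e4, e5, e1, e2, Matrix.mulVec_sub]
    abel
  refine ⟨?_, ?_⟩
  · intro xin η hη hη0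
    constructor
    · -- existence
      set c : ℝ → (Fin d → ℝ) := fun t => xin + B.mulVec (η ↑(Set.projIcc 0 T hT.le t)) with hc
      have hBc : Continuous fun w : Fin n → ℝ => B.mulVec w := by
        have he : (fun w : Fin n → ℝ => B.mulVec w) = ⇑CBmap := by
          funext w; rw [hCBcoe]
        rw [he]; exact CBmap.continuous
      have hηc : Continuous fun t : ℝ => η ↑(Set.projIcc 0 T hT.le t) :=
        hη.comp_continuous (continuous_subtype_val.comp continuous_projIcc)
          (fun s => (Set.projIcc 0 T hT.le s).2)
      have hcc : Continuous c := continuous_const.add (hBc.comp hηc)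
      obtain ⟨x, hxc, hxeq⟩ := exists_sol hK hGlip hcc hT
      refine ⟨x, hxc.continuousOn, fun t ht => ?_⟩
      rw [hxeq t ht]
      have hct : c t = xin + B.mulVec (η t) := by
        rw [hc]; simp [Set.projIcc_of_mem hT.le ht]
      have hIeq : (∫ s in (0:ℝ)..t, (A.mulVec (x s) + F (x s)))
          = ∫ s in (0:ℝ)..t, G (x s) := rfl
      rw [hct, hIeq]
      abel
    · -- uniqueness
      intro x y hxs hys s hs
      have heq : ∀ t ∈ Set.Icc (0:ℝ) T,
          x t - y t = (fun _ : ℝ => (0 : Fin d → ℝ)) t +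
            ∫ r in (0:ℝ)..t, (G (x r) - G (y r)) := by
        intro t ht
        have h := hsub xin xin η η x y hxs hys t ht
        simpa using h
      have hb := gron hK hGlip hT hxs.1 hys.1 (δ := 0) (by simp) heq s hs
      have : ‖x s - y s‖ ≤ 0 := by simpa using hb
      exact sub_eq_zero.mp (norm_le_zero_iff.mp this)
  · -- continuous dependence
    intro t ht xin η x hη hη0 hxs ε hε
    set C := Real.sqrt d * ((1 + CB) * (Real.exp (K * T) + 1)) with hCdef
    have hC0 : 0 ≤ C := by positivity
    have hC1 : 0 < C + 1 := by positivity
    refine ⟨ε / (C + 1), by positivity, ?_⟩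
    intro xin' η' x' hη' hη0' hxs' hδxin hδη
    set δ := ε / (C + 1) with hδdef
    have hδ0 : 0 < δ := by positivity
    have ha : ∀ s ∈ Set.Icc (0:ℝ) T,
        ‖(xin - xin') + B.mulVec (η s - η' s)‖ ≤ (1 + CB) * δ := by
      intro s hs
      calc ‖(xin - xin') + B.mulVec (η s - η' s)‖
          ≤ ‖xin - xin'‖ + ‖B.mulVec (η s - η' s)‖ := norm_add_le _ _
        _ ≤ δ + CB * δ := by
            refine add_le_add ?_ ?_
            · exact (norm_le_eNorm _).trans hδxin.le
            · refine (hBw _).trans ?_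
              exact mul_le_mul_of_nonneg_left
                ((norm_le_eNorm _).trans (hδη s hs).le) hCB0
        _ = (1 + CB) * δ := by ring
    have heq : ∀ s ∈ Set.Icc (0:ℝ) T,
        x s - x' s = (fun r : ℝ => (xin - xin') + B.mulVec (η r - η' r)) s +
          ∫ r in (0:ℝ)..s, (G (x r) - G (x' r)) :=
      fun s hs => hsub xin xin' η η' x x' hxs hxs' s hs
    have hb := gron hK hGlip hT hxs.1 hxs'.1 ha heq t ht
    have hfin : eNorm (x t - x' t) ≤ C * δ := by
      calc eNorm (x t - x' t) ≤ Real.sqrt d * ‖x t - x' t‖ := eNorm_le _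
        _ ≤ Real.sqrt d * ((1 + CB) * δ * Real.exp (K * T) + (1 + CB) * δ) :=
            mul_le_mul_of_nonneg_left hb (Real.sqrt_nonneg _)
        _ = C * δ := by rw [hCdef]; ring
    have hlt : C * δ < ε := by
      have hCδ : (C + 1) * δ = ε := by
        rw [hδdef]; field_simp
      have h9 : C * δ < (C + 1) * δ := by nlinarith
      rw [hCδ] at h9
      exact h9
    exact lt_of_le_of_lt hfin hlt
end

section
/- Let (P_t)_{t≥0} be a family of Markov transition kernels on ℝ^d satisfying the Chapman–Kolmogorov equation. Let V : ℝ^d → [0,∞) be Borel measurable and suppose there are constants γ ∈ (0,1) and K > 0 such that ∫ V(y) P_t(x,dy) ≤ γ^t V(x) + K for all x ∈ ℝ^d and all t ≥ 0. Let μ be a Borel probability measure on ℝ^d with ∫ V dμ < ∞ that is invariant for P_2, i.e. ∫ P_2(x,Γ) μ(dx) = μ(Γ) for every Borel set Γ. Assume there exist constants C, c > 0 such that for every m ∈ ℕ ∪ {0}, every Borel probability measure λ on ℝ^d with ∫ V dλ < ∞, and every Borel set Γ ⊆ ℝ^d, one has |∫ P_{2m}(x,Γ) λ(dx) − μ(Γ)|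 ≤ C e^{−c(2m+2)} (1 + ∫ V dλ). Then μ is invariant for the whole semigroup: ∫ P_s(x,Γ) μ(dx) = μ(Γ) for every s ≥ 0 and every Borel set Γ ⊆ ℝ^d. -/
open MeasureTheory ProbabilityTheory

/-- Given a family of Markov transition kernels `(P_t)` on `ℝ^d` satisfying
the Chapman–Kolmogorov equation, a Lyapunov function `V` with `∫ V dP_t(x,·) ≤ γ^t V x + K`,
a probability measure `μ` with `∫ V dμ < ∞` invariant for `P_2`, and the exponential total
variation estimate for the 2-skeleton, the measure `μ` is invariant for every `P_s`, `s ≥ 0`. -/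
theorem stmt7 {d : ℕ}
    (P : ℝ → Kernel (Fin d → ℝ) (Fin d → ℝ))
    (hMarkov : ∀ t : ℝ, 0 ≤ t → IsMarkovKernel (P t))
    (hCK : ∀ s t : ℝ, 0 ≤ s → 0 ≤ t → ∀ x : Fin d → ℝ, ∀ Γ : Set (Fin d → ℝ),
      MeasurableSet Γ → P (t + s) x Γ = ∫⁻ y, P s y Γ ∂(P t x))
    (V : (Fin d → ℝ) → ℝ) (hVmeas : Measurable V) (hVnonneg : ∀ x, 0 ≤ V x)
    (γ K : ℝ) (hγ0 : 0 < γ) (hγ1 : γ < 1) (hK : 0 < K)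
    (hVint : ∀ t : ℝ, 0 ≤ t → ∀ x, Integrable V (P t x))
    (hLyap : ∀ t : ℝ, 0 ≤ t → ∀ x, (∫ y, V y ∂(P t x)) ≤ γ ^ t * V x + K)
    (μ : Measure (Fin d → ℝ)) [IsProbabilityMeasure μ]
    (hμV : Integrable V μ)
    (hμinv : ∀ Γ : Set (Fin d → ℝ), MeasurableSet Γ → ∫⁻ x, P 2 x Γ ∂μ = μ Γ)
    (C c : ℝ) (hC : 0 < C) (hc : 0 < c)
    (hconv : ∀ m : ℕ, ∀ lam : Measure (Fin d → ℝ), IsProbabilityMeasure lam →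
      Integrable V lam → ∀ Γ : Set (Fin d → ℝ), MeasurableSet Γ →
      |(∫ x, ((P (2 * (m : ℝ)) x) Γ).toReal ∂lam) - (μ Γ).toReal|
        ≤ C * Real.exp (-c * (2 * (m : ℝ) + 2)) * (1 + ∫ x, V x ∂lam)) :
    ∀ s : ℝ, 0 ≤ s → ∀ Γ : Set (Fin d → ℝ), MeasurableSet Γ →
      ∫⁻ x, P s x Γ ∂μ = μ Γ := by
  intro s hs Γ hΓ
  classical
  haveI hPs : IsMarkovKernel (P s) := hMarkov s hs
  have hPmeas : ∀ t : ℝ, Measurable fun x => (P t) x := fun t => (P t).measurable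
  -- invariance of μ under P (2n+2)
  have hinv : ∀ n : ℕ, ∀ Γ' : Set (Fin d → ℝ), MeasurableSet Γ' →
      ∫⁻ x, P (2 * (n : ℝ) + 2) x Γ' ∂μ = μ Γ' := by
    intro n
    induction n with
    | zero => intro Γ' hΓ'; simpa using hμinv Γ' hΓ'
    | succ n ih =>
      intro Γ' hΓ'
      have h0 : (0 : ℝ) ≤ 2 * (n : ℝ) + 2 := by positivity
      have hcast : (2 * ((n + 1 : ℕ) : ℝ) + 2) = (2 * (n : ℝ) + 2) + 2 := by push_cast; ring
      rw [hcast]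
      have hbind : μ.bind (fun x => P (2 * (n : ℝ) + 2) x) = μ := by
        ext Γ'' hΓ''
        rw [Measure.bind_apply hΓ'' (hPmeas _).aemeasurable]
        exact ih Γ'' hΓ''
      calc ∫⁻ x, P ((2 * (n : ℝ) + 2) + 2) x Γ' ∂μ
          = ∫⁻ x, ∫⁻ y, P 2 y Γ' ∂(P (2 * (n : ℝ) + 2) x) ∂μ :=
            lintegral_congr fun x => hCK 2 (2 * (n : ℝ) + 2) (by norm_num) h0 x Γ' hΓ'
        _ = ∫⁻ y, P 2 y Γ' ∂(μ.bind (fun x => P (2 * (n : ℝ) + 2) x)) :=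
            (Measure.lintegral_bind (hPmeas _).aemeasurable ((P 2).measurable_coe hΓ').aemeasurable).symm
        _ = ∫⁻ y, P 2 y Γ' ∂μ := by rw [hbind]
        _ = μ Γ' := hμinv Γ' hΓ'
  set lam : Measure (Fin d → ℝ) := μ.bind (fun x => P s x) with hlamdef
  haveI hlamprob : IsProbabilityMeasure lam := by
    constructor
    rw [hlamdef, Measure.bind_apply MeasurableSet.univ (hPmeas s).aemeasurable]
    simp
  -- integrability of V w.r.t. lam
  have hVlam : Integrable V lam := by
    refine ⟨hVmeas.aestronglyMeasurable, ?_⟩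
    rw [hasFiniteIntegral_iff_ofReal (ae_of_all _ hVnonneg)]
    rw [hlamdef, Measure.lintegral_bind (hPmeas s).aemeasurable hVmeas.ennreal_ofReal.aemeasurable]
    have hfin : ∫⁻ x, ENNReal.ofReal (γ ^ s * V x + K) ∂μ < ⊤ := by
      have hI : Integrable (fun x => γ ^ s * V x + K) μ :=
        (hμV.const_mul _).add (integrable_const K)
      have hnn : 0 ≤ᵐ[μ] fun x => γ ^ s * V x + K :=
        ae_of_all _ fun x => add_nonneg (mul_nonneg (Real.rpow_nonneg hγ0.le s) (hVnonneg x)) hK.le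
      have := hI.2
      rwa [hasFiniteIntegral_iff_ofReal hnn] at this
    refine lt_of_le_of_lt (lintegral_mono fun x => ?_) hfin
    rw [← ofReal_integral_eq_lintegral_ofReal (hVint s hs x) (ae_of_all _ hVnonneg)]
    exact ENNReal.ofReal_le_ofReal (hLyap s hs x)
  -- key identity: lam ∘ P_{2n+2} (Γ) = lam Γ
  have key : ∀ n : ℕ, ∫⁻ x, P (2 * (n : ℝ) + 2) x Γ ∂lam = lam Γ := by
    intro n
    have h0 : (0 : ℝ) ≤ 2 * (n : ℝ) + 2 := by positivity
    have hbind : μ.bind (fun x => P (2 * (n : ℝ) + 2) x) = μ := by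
      ext Γ'' hΓ''
      rw [Measure.bind_apply hΓ'' (hPmeas _).aemeasurable]
      exact hinv n Γ'' hΓ''
    calc ∫⁻ x, P (2 * (n : ℝ) + 2) x Γ ∂lam
        = ∫⁻ x, ∫⁻ y, P (2 * (n : ℝ) + 2) y Γ ∂(P s x) ∂μ :=
          Measure.lintegral_bind (hPmeas s).aemeasurable ((P _).measurable_coe hΓ).aemeasurable
      _ = ∫⁻ x, P (s + (2 * (n : ℝ) + 2)) x Γ ∂μ :=
          lintegral_congr fun x => (hCK (2 * (n : ℝ) + 2) s h0 hs x Γ hΓ).symm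
      _ = ∫⁻ x, P ((2 * (n : ℝ) + 2) + s) x Γ ∂μ := by rw [add_comm]
      _ = ∫⁻ x, ∫⁻ y, P s y Γ ∂(P (2 * (n : ℝ) + 2) x) ∂μ :=
          lintegral_congr fun x => hCK s (2 * (n : ℝ) + 2) hs h0 x Γ hΓ
      _ = ∫⁻ y, P s y Γ ∂(μ.bind (fun x => P (2 * (n : ℝ) + 2) x)) :=
          (Measure.lintegral_bind (hPmeas _).aemeasurable ((P s).measurable_coe hΓ).aemeasurable).symm
      _ = ∫⁻ y, P s y Γ ∂μ := by rw [hbind]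
      _ = lam Γ := (Measure.bind_apply hΓ (hPmeas s).aemeasurable).symm
  -- the bound
  set I : ℝ := ∫ x, V x ∂lam with hI
  have hb : ∀ m : ℕ, |(lam Γ).toReal - (μ Γ).toReal|
      ≤ C * Real.exp (-c * (2 * (m : ℝ) + 2 + 2)) * (1 + I) := by
    intro m
    have h := hconv (m + 1) lam hlamprob hVlam Γ hΓ
    have hcast : (2 * ((m + 1 : ℕ) : ℝ)) = 2 * (m : ℝ) + 2 := by push_cast; ring
    rw [hcast] at h
    have hm0 : (0 : ℝ) ≤ 2 * (m : ℝ) + 2 := by positivity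
    haveI := hMarkov (2 * (m : ℝ) + 2) hm0
    have hint : ∫ x, ((P (2 * (m : ℝ) + 2) x) Γ).toReal ∂lam = (lam Γ).toReal := by
      rw [integral_toReal (((P _).measurable_coe hΓ).aemeasurable)
        (ae_of_all _ fun x => lt_of_le_of_lt (prob_le_one) ENNReal.one_lt_top)]
      rw [key m]
    rw [hint] at h
    exact h
  -- limit
  have htend : Filter.Tendsto (fun m : ℕ => C * Real.exp (-c * (2 * (m : ℝ) + 2 + 2)) * (1 + I))
      Filter.atTop (nhds 0) := by
    have h1 : Filter.Tendsto (fun m : ℕ => -c * (2 * (m : ℝ) + 2 + 2)) Filter.atTop Filter.atBot := by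
      have h2 : Filter.Tendsto (fun m : ℕ => 2 * (m : ℝ) + 2 + 2) Filter.atTop Filter.atTop := by
        apply Filter.tendsto_atTop_add_const_right
        apply Filter.tendsto_atTop_add_const_right
        exact (tendsto_natCast_atTop_atTop).const_mul_atTop (by norm_num)
      exact h2.const_mul_atTop_of_neg (neg_lt_zero.mpr hc)
    have hexp : Filter.Tendsto (fun m : ℕ => Real.exp (-c * (2 * (m : ℝ) + 2 + 2)))
        Filter.atTop (nhds 0) := Real.tendsto_exp_atBot.comp h1
    simpa using (hexp.const_mul C).mul_const (1 + I)
  have habs : |(lam Γ).toReal - (μ Γ).toReal| ≤ 0 := ge_of_tendsto' htend hb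
  have heq : (lam Γ).toReal = (μ Γ).toReal := by
    have := abs_nonpos_iff.mp habs
    linarith
  have hfin : lam Γ = μ Γ :=
    (ENNReal.toReal_eq_toReal_iff' (measure_ne_top lam Γ) (measure_ne_top μ Γ)).mp heq
  rw [← Measure.bind_apply hΓ (hPmeas s).aemeasurable]
  exact hfin
end

section
/- Let (P_t)_{t≥0} be a family of Markov transition kernels on ℝ^d satisfying the Chapman–Kolmogorov equation. Let V : ℝ^d → [0,∞) be Borel measurable with constants γ ∈ (0,1) and K > 0 such that ∫ V(y) P_t(x,dy) ≤ γ^t V(x) + K for all x ∈ ℝ^d and t ≥ 0. Let μ be a Borel probability measure on ℝ^d with ∫ V dμ < ∞, and suppose there exist constants C, c > 0 such that for every x ∈ ℝ^d, every m ∈ ℕ ∪ {0}, and every Borel measurable f : ℝ^d → ℝ with |f| ≤ 1 + V pointwise, one has |∫ f(y) P_{2m}(x,dy) − ∫ f dμ| ≤ C e^{−c(2m+2)} (1 + V(x)). Then for every x ∈ ℝ^d, every t ≥ 0 and every Borel measurable f : ℝ^d → ℝ with |f| ≤ 1 + V, one has |∫ f(y) P_t(x,dy) − ∫ f dμ| ≤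 (K+1) C e^{−c t} (1 + V(x)). -/
open MeasureTheory ProbabilityTheory

lemma my_integral_comp {α β : Type*} [MeasurableSpace α] [MeasurableSpace β]
    (κ : Kernel α β) (η : Kernel β β) [IsSFiniteKernel κ] [IsSFiniteKernel η]
    (a : α) {f : β → ℝ} (hf : Integrable f ((η ∘ₖ κ) a)) :
    ∫ z, f z ∂((η ∘ₖ κ) a) = ∫ x, ∫ y, f y ∂(η x) ∂(κ a) := by
  rw [← Kernel.snd_compProd_prodMkLeft κ η] at hf ⊢
  rw [Kernel.snd_apply] at hf ⊢
  rw [integral_map measurable_snd.aemeasurable hf.aestronglyMeasurable]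
  have hf' : Integrable (fun z : β × β => f z.2) ((κ ⊗ₖ Kernel.prodMkLeft α η) a) :=
    (integrable_map_measure hf.aestronglyMeasurable measurable_snd.aemeasurable).mp hf
  rw [ProbabilityTheory.integral_compProd hf']
  simp [Kernel.prodMkLeft_apply]

/-- Given a family of Markov transition kernels `(P_t)` on `ℝ^d` satisfying
the Chapman–Kolmogorov equation, a Lyapunov function `V` with `∫ V dP_t(x,·) ≤ γ^t V x + K`,
a probability measure `μ` with `∫ V dμ < ∞`, and the exponential estimate over the 2-skeleton
for all observables `|f| ≤ 1 + V`, the same convergence extends to all continuous times: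
`|∫ f dP_t(x,·) − ∫ f dμ| ≤ (K+1) C e^{−ct} (1 + V x)`. -/
theorem stmt8 {d : ℕ}
    (P : ℝ → Kernel (Fin d → ℝ) (Fin d → ℝ))
    (hMarkov : ∀ t : ℝ, 0 ≤ t → IsMarkovKernel (P t))
    (hCK : ∀ s t : ℝ, 0 ≤ s → 0 ≤ t → ∀ x : Fin d → ℝ, ∀ Γ : Set (Fin d → ℝ),
      MeasurableSet Γ → P (t + s) x Γ = ∫⁻ y, P s y Γ ∂(P t x))
    (V : (Fin d → ℝ) → ℝ) (hVmeas : Measurable V) (hVnonneg : ∀ x, 0 ≤ V x)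
    (γ K : ℝ) (hγ0 : 0 < γ) (hγ1 : γ < 1) (hK : 0 < K)
    (hVint : ∀ t : ℝ, 0 ≤ t → ∀ x, Integrable V (P t x))
    (hLyap : ∀ t : ℝ, 0 ≤ t → ∀ x, (∫ y, V y ∂(P t x)) ≤ γ ^ t * V x + K)
    (μ : Measure (Fin d → ℝ)) [IsProbabilityMeasure μ]
    (hμV : Integrable V μ)
    (C c : ℝ) (hC : 0 < C) (hc : 0 < c)
    (hconv : ∀ x : Fin d → ℝ, ∀ m : ℕ, ∀ f : (Fin d → ℝ) → ℝ, Measurable f →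
      (∀ y, |f y| ≤ 1 + V y) →
      |(∫ y, f y ∂(P (2 * (m : ℝ)) x)) - ∫ y, f y ∂μ|
        ≤ C * Real.exp (-c * (2 * (m : ℝ) + 2)) * (1 + V x)) :
    ∀ x : Fin d → ℝ, ∀ t : ℝ, 0 ≤ t → ∀ f : (Fin d → ℝ) → ℝ, Measurable f →
      (∀ y, |f y| ≤ 1 + V y) →
      |(∫ y, f y ∂(P t x)) - ∫ y, f y ∂μ|
        ≤ (K + 1) * C * Real.exp (-c * t) * (1 + V x) := by
  intro x t ht f hfmeas hfbd
  set m : ℕ := ⌊t / 2⌋₊ with hm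
  set s : ℝ := t - 2 * m with hsdef
  have hm2 : 2 * (m : ℝ) ≤ t := by
    have := Nat.floor_le (by positivity : (0:ℝ) ≤ t / 2)
    rw [← hm] at this; linarith
  have hs0 : 0 ≤ s := by simp [hsdef]; linarith
  have hts : t ≤ 2 * (m : ℝ) + 2 := by
    have := Nat.lt_floor_add_one (t / 2)
    rw [← hm] at this; linarith
  have h2m : (0:ℝ) ≤ 2 * m := by positivity
  haveI := hMarkov s hs0
  haveI := hMarkov (2 * (m : ℝ)) h2m
  haveI := hMarkov t ht
  -- decomposition of the kernel
  have hPt : P t x = (P (2 * (m : ℝ)) ∘ₖ P s) x := by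
    ext Γ hΓ
    rw [Kernel.comp_apply' _ _ _ hΓ]
    have := hCK (2 * (m : ℝ)) s h2m hs0 x Γ hΓ
    rw [show s + 2 * (m : ℝ) = t by rw [hsdef]; ring] at this
    exact this
  -- integrability of f against the kernels
  have hfint : ∀ u : ℝ, 0 ≤ u → ∀ z, Integrable f (P u z) := by
    intro u hu z
    haveI := hMarkov u hu
    refine ((integrable_const 1).add (hVint u hu z)).mono
      hfmeas.aestronglyMeasurable (Filter.Eventually.of_forall fun y => ?_)
    simpa using (hfbd y).trans (le_abs_self _)
  -- the averaged observable
  set h : (Fin d → ℝ) → ℝ := fun y => ∫ z, f z ∂(P (2 * (m : ℝ)) y) with hh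
  have hγ2m : γ ^ (2 * (m : ℝ)) ≤ 1 := Real.rpow_le_one hγ0.le hγ1.le h2m
  have hhbd : ∀ y, |h y| ≤ 1 + K + V y := by
    intro y
    have h1 : |h y| ≤ ∫ z, (1 + V z) ∂(P (2 * (m : ℝ)) y) := by
      rw [hh]
      refine (norm_integral_le_integral_norm f).trans ?_
      refine integral_mono_of_nonneg (Filter.Eventually.of_forall fun z => abs_nonneg _)
        ((integrable_const 1).add (hVint _ h2m y))
        (Filter.Eventually.of_forall fun z => hfbd z)
    have h2 : ∫ z, (1 + V z) ∂(P (2 * (m : ℝ)) y) = 1 + ∫ z, V z ∂(P (2 * (m : ℝ)) y) := by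
      rw [integral_add (integrable_const 1) (hVint _ h2m y), integral_const]
      simp
    have h3 := hLyap (2 * (m : ℝ)) h2m y
    have h4 : γ ^ (2 * (m : ℝ)) * V y ≤ V y := by
      nlinarith [hVnonneg y]
    calc |h y| ≤ 1 + ∫ z, V z ∂(P (2 * (m : ℝ)) y) := h2 ▸ h1
      _ ≤ 1 + K + V y := by linarith
  have hhmeas : StronglyMeasurable h := by
    have : StronglyMeasurable (Function.uncurry fun (_ : Fin d → ℝ) z => f z) :=
      (hfmeas.comp measurable_snd).stronglyMeasurable
    exact this.integral_kernel_prod_right (κ := P (2 * (m : ℝ)))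
  have hhint : Integrable h (P s x) := by
    refine ((integrable_const (1 + K)).add (hVint s hs0 x)).mono
      hhmeas.aestronglyMeasurable (Filter.Eventually.of_forall fun y => ?_)
    have := hhbd y
    have : |h y| ≤ |1 + K + V y| := this.trans (le_abs_self _)
    simpa using this
  -- rewrite the integral
  have hcomp : ∫ y, f y ∂(P t x) = ∫ y, h y ∂(P s x) := by
    rw [hPt]
    exact my_integral_comp (P s) (P (2 * (m : ℝ))) x (hPt ▸ hfint t ht x)
  set c0 : ℝ := ∫ y, f y ∂μ with hc0
  have hsplit : ∫ y, f y ∂(P t x) - c0 = ∫ y, (h y - c0) ∂(P s x) := by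
    rw [hcomp, integral_sub hhint (integrable_const c0), integral_const]
    simp
  -- bound
  set E2 : ℝ := Real.exp (-c * (2 * (m : ℝ) + 2)) with hE2
  set Et : ℝ := Real.exp (-c * t) with hEt
  have hE : E2 ≤ Et := by
    apply Real.exp_le_exp.mpr; nlinarith
  have hboundint : Integrable (fun y => C * E2 * (1 + V y)) (P s x) :=
    (((integrable_const 1).add (hVint s hs0 x)).const_mul (C * E2))
  have hmain : |∫ y, (h y - c0) ∂(P s x)| ≤ ∫ y, C * E2 * (1 + V y) ∂(P s x) := by
    calc |∫ y, (h y - c0) ∂(P s x)| = ‖∫ y, (h y - c0) ∂(P s x)‖ := (Real.norm_eq_abs _).symm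
      _ ≤ ∫ y, ‖h y - c0‖ ∂(P s x) := norm_integral_le_integral_norm _
      _ ≤ ∫ y, C * E2 * (1 + V y) ∂(P s x) := by
          refine integral_mono_of_nonneg (Filter.Eventually.of_forall fun y => norm_nonneg _)
            hboundint (Filter.Eventually.of_forall fun y => ?_)
          show ‖h y - c0‖ ≤ C * E2 * (1 + V y)
          rw [Real.norm_eq_abs]
          exact hconv y m f hfmeas hfbd
  have hVs : ∫ y, V y ∂(P s x) ≤ V x + K := by
    have h3 := hLyap s hs0 x
    have h4 : γ ^ s * V x ≤ V x := by
      have := Real.rpow_le_one hγ0.le hγ1.le hs0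
      nlinarith [hVnonneg x]
    linarith
  have hVs0 : 0 ≤ ∫ y, V y ∂(P s x) :=
    integral_nonneg fun y => hVnonneg y
  have hint2 : ∫ y, C * E2 * (1 + V y) ∂(P s x)
      = C * E2 * (1 + ∫ y, V y ∂(P s x)) := by
    rw [integral_const_mul, integral_add (integrable_const 1) (hVint s hs0 x), integral_const]
    simp
  have hE2pos : 0 < E2 := Real.exp_pos _
  have hEtpos : 0 < Et := Real.exp_pos _
  calc |∫ y, f y ∂(P t x) - c0| = |∫ y, (h y - c0) ∂(P s x)| := by rw [hsplit]
    _ ≤ C * E2 * (1 + ∫ y, V y ∂(P s x)) := hint2 ▸ hmain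
    _ ≤ C * E2 * ((K + 1) * (1 + V x)) := by
        have : 1 + ∫ y, V y ∂(P s x) ≤ (K + 1) * (1 + V x) := by
          nlinarith [hVnonneg x]
        have hCE : 0 ≤ C * E2 := by positivity
        exact mul_le_mul_of_nonneg_left this hCE
    _ ≤ (K + 1) * C * Et * (1 + V x) := by
        have h1 : 0 ≤ (K + 1) * (1 + V x) := by nlinarith [hVnonneg x]
        nlinarith [hVnonneg x, mul_le_mul_of_nonneg_right hE h1]
end

section
/- Let A be a real d×d matrix, let F : ℝ^d → ℝ^d be smooth and globally Lipschitz, and set G(x) := Ax + F(x). Fix b ∈ ℝ^d and k ∈ ℕ, and let ℒ_G^k b be the k-fold Lie derivative of the constant vector field b along G, defined recursively by (ℒ_G^0 b)(x) = b and (ℒ_G^{j+1} b)(x) = D(ℒ_G^j b)(x)[G(x)] − DG(x)[(ℒ_G^j b)(x)]. Suppose (y⁽ⁿ⁾)_{n∈ℕ} is a sequence in ℝ^d with inf_n |y⁽ⁿ⁾| > 0 such that lim_{n→∞} |y⁽ⁿ⁾|^{j−1} ‖D^j F(y⁽ⁿ⁾)‖ = 0 for each j = 1, 2, …, k. Then lim_{n→∞}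 |(ℒ_G^k b)(y⁽ⁿ⁾) − (−1)^k (DG(y⁽ⁿ⁾))^k b| = 0, where DG(y) = A + DF(y). -/
open Filter

/-- Iterated Lie derivative of the constant vector field `b` along the vector field `G`:
`ℒ_G^0 b = b` and `(ℒ_G^{j+1} b)(x) = D(ℒ_G^j b)(x)[G(x)] − DG(x)[(ℒ_G^j b)(x)]`. -/
noncomputable def lieIter {E : Type*} [NormedAddCommGroup E] [NormedSpace ℝ E]
    (G : E → E) (b : E) : ℕ → E → E
  | 0 => fun _ => b
  | j + 1 => fun x => fderiv ℝ (lieIter G b j) x (G x) - fderiv ℝ G x (lieIter G b j x)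


open Filter

section Aux

variable {E : Type*} [NormedAddCommGroup E] [NormedSpace ℝ E]

/-- weighted norm of iterated derivative along the sequence -/
noncomputable def wd (y : ℕ → E) (i : ℕ) (h : E → E) (n : ℕ) : ℝ :=
  (1 + ‖y n‖) ^ i * ‖iteratedFDeriv ℝ i h (y n)‖

lemma wd_nonneg (y : ℕ → E) (i : ℕ) (h : E → E) (n : ℕ) : 0 ≤ wd y i h n := by
  unfold wd; positivity

structure FlatS (y : ℕ → E) (q : ℕ) (h : E → E) : Prop where
  smooth : ContDiff ℝ (⊤ : ℕ∞) h
  bdd : ∀ i, i ≤ q → ∃ C, ∀ n, wd y i h n ≤ C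
  small : ∀ i, 1 ≤ i → i ≤ q → Tendsto (wd y i h) atTop (nhds 0)

structure SmallS (y : ℕ → E) (q : ℕ) (h : E → E) : Prop where
  smooth : ContDiff ℝ (⊤ : ℕ∞) h
  small : ∀ i, i ≤ q → Tendsto (wd y i h) atTop (nhds 0)

structure HypGS (y : ℕ → E) (K : ℕ) (G : E → E) : Prop where
  smooth : ContDiff ℝ (⊤ : ℕ∞) G
  lin : ∃ C, ∀ n, ‖G (y n)‖ ≤ C * (1 + ‖y n‖)
  bdd : ∀ i, 1 ≤ i → i ≤ K →
    ∃ C, ∀ n, (1 + ‖y n‖) ^ (i - 1) * ‖iteratedFDeriv ℝ i G (y n)‖ ≤ C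
  small : ∀ i, 2 ≤ i → i ≤ K →
    Tendsto (fun n => (1 + ‖y n‖) ^ (i - 1) * ‖iteratedFDeriv ℝ i G (y n)‖) atTop (nhds 0)

lemma bdd_of_tendsto {u : ℕ → ℝ} (h : Tendsto u atTop (nhds 0)) : ∃ C, ∀ n, u n ≤ C := by
  obtain ⟨C, hC⟩ := h.bddAbove_range
  exact ⟨C, fun n => hC ⟨n, rfl⟩⟩

lemma SmallS.toFlat {y : ℕ → E} {q : ℕ} {h : E → E} (hh : SmallS y q h) : FlatS y q h :=
  ⟨hh.smooth, fun i hi => bdd_of_tendsto (hh.small i hi), fun i _ hi => hh.small i hi⟩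

lemma SmallS.mono {y : ℕ → E} {q q' : ℕ} {h : E → E} (hh : SmallS y q h) (hq : q' ≤ q) :
    SmallS y q' h :=
  ⟨hh.smooth, fun i hi => hh.small i (le_trans hi hq)⟩

lemma tendsto_mul_bdd {u v : ℕ → ℝ} (hu : Tendsto u atTop (nhds 0)) (h0u : ∀ n, 0 ≤ u n)
    (hv : ∃ C, ∀ n, v n ≤ C) (h0v : ∀ n, 0 ≤ v n) :
    Tendsto (fun n => u n * v n) atTop (nhds 0) := by
  obtain ⟨C, hC⟩ := hv
  refine squeeze_zero (g := fun n => C * u n) (fun n => mul_nonneg (h0u n) (h0v n))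
    (fun n => ?_) (by simpa using hu.const_mul C)
  calc u n * v n ≤ u n * C := mul_le_mul_of_nonneg_left (hC n) (h0u n)
    _ = C * u n := mul_comm _ _

lemma bdd_sum {ι : Type*} (s : Finset ι) (g : ι → ℕ → ℝ)
    (h : ∀ t ∈ s, ∃ C, ∀ n, g t n ≤ C) : ∃ C, ∀ n, (∑ t ∈ s, g t n) ≤ C := by
  choose C hC using h
  refine ⟨∑ t ∈ s.attach, C t t.2, fun n => ?_⟩
  rw [← Finset.sum_attach s (fun t => g t n)]
  exact Finset.sum_le_sum fun t _ => hC t t.2 n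

lemma norm_apply_le_one : ‖(ContinuousLinearMap.apply ℝ E : E →L[ℝ] (E →L[ℝ] E) →L[ℝ] E)‖ ≤ 1 := by
  refine ContinuousLinearMap.opNorm_le_bound _ zero_le_one fun v => ?_
  rw [one_mul]
  refine ContinuousLinearMap.opNorm_le_bound _ (norm_nonneg v) fun f => ?_
  simpa [mul_comm] using f.le_opNorm v

/-- derivative-apply bound : `‖D^i (x ↦ Dh(x)[g x])‖ ≤ Σ C(i,t) ‖D^t g‖ ‖D^{i−t+1} h‖`. -/
lemma bound1 {g h : E → E} (hg : ContDiff ℝ (⊤ : ℕ∞) g) (hh : ContDiff ℝ (⊤ : ℕ∞) h) (i : ℕ) (x : E) :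
    ‖iteratedFDeriv ℝ i (fun z => fderiv ℝ h z (g z)) x‖ ≤
      ∑ t ∈ Finset.range (i + 1), (i.choose t : ℝ) * ‖iteratedFDeriv ℝ t g x‖ *
        ‖iteratedFDeriv ℝ (i - t + 1) h x‖ := by
  have hB := (ContinuousLinearMap.apply ℝ E).norm_iteratedFDeriv_le_of_bilinear
    (f := g) (g := fderiv ℝ h) hg (hh.fderiv_right (by simp)) x (n := i) (by exact_mod_cast le_top)
  have hle : ‖iteratedFDeriv ℝ i (fun z => fderiv ℝ h z (g z)) x‖ ≤
      1 * ∑ t ∈ Finset.range (i + 1), (i.choose t : ℝ) * ‖iteratedFDeriv ℝ t g x‖ *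
        ‖iteratedFDeriv ℝ (i - t) (fderiv ℝ h) x‖ := by
    refine le_trans (le_of_eq ?_) (hB.trans ?_)
    · rfl
    · apply mul_le_mul_of_nonneg_right norm_apply_le_one
      refine Finset.sum_nonneg fun t _ => by positivity
  rw [one_mul] at hle
  refine hle.trans (le_of_eq (Finset.sum_congr rfl fun t _ => ?_))
  rw [norm_iteratedFDeriv_fderiv]

end Aux
section Aux2
variable {E : Type*} [NormedAddCommGroup E] [NormedSpace ℝ E]

/-- bound for `x ↦ DG(x)[h x]`. -/
lemma bound2 {G h : E → E} (hG : ContDiff ℝ (⊤ : ℕ∞) G) (hh : ContDiff ℝ (⊤ : ℕ∞) h) (i : ℕ) (x : E) :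
    ‖iteratedFDeriv ℝ i (fun z => fderiv ℝ G z (h z)) x‖ ≤
      ∑ t ∈ Finset.range (i + 1), (i.choose t : ℝ) * ‖iteratedFDeriv ℝ t h x‖ *
        ‖iteratedFDeriv ℝ (i - t + 1) G x‖ :=
  bound1 hh hG i x

variable {y : ℕ → E} {K : ℕ} {G : E → E}

/-- L1 : if `h` is flat of order `q+1`, then `x ↦ Dh(x)[G x]` is small of order `q`. -/
lemma FlatS.derivApplyG (hG : HypGS y K G) {q : ℕ} (hq : q ≤ K) {h : E → E}
    (hh : FlatS y (q + 1) h) : SmallS y q (fun x => fderiv ℝ h x (G x)) := by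
  refine ⟨(hh.smooth.fderiv_right (by simp)).clm_apply hG.smooth, fun i hi => ?_⟩
  have hle : ∀ n, wd y i (fun x => fderiv ℝ h x (G x)) n ≤
      ∑ t ∈ Finset.range (i + 1), (i.choose t : ℝ) *
        ((1 + ‖y n‖) ^ i * (‖iteratedFDeriv ℝ t G (y n)‖ *
          ‖iteratedFDeriv ℝ (i - t + 1) h (y n)‖)) := by
    intro n
    have h1 := bound1 hG.smooth hh.smooth i (y n)
    calc wd y i (fun x => fderiv ℝ h x (G x)) n
        ≤ (1 + ‖y n‖) ^ i * ∑ t ∈ Finset.range (i + 1), (i.choose t : ℝ) *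
            ‖iteratedFDeriv ℝ t G (y n)‖ * ‖iteratedFDeriv ℝ (i - t + 1) h (y n)‖ := by
          unfold wd; exact mul_le_mul_of_nonneg_left h1 (by positivity)
      _ = _ := by rw [Finset.mul_sum]; exact Finset.sum_congr rfl fun t _ => by ring
  refine squeeze_zero (fun n => wd_nonneg _ _ _ _) hle ?_
  have h0 : (0:ℝ) = ∑ t ∈ Finset.range (i+1), (0:ℝ) := by simp
  rw [h0]
  refine tendsto_finset_sum _ fun t ht => ?_
  have htle : t ≤ i := by simpa [Nat.lt_succ_iff] using Finset.mem_range.mp ht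
  rcases Nat.eq_zero_or_pos t with rfl | htpos
  · -- t = 0 : use linear growth of G
    obtain ⟨C, hC⟩ := hG.lin
    have hsm := hh.small (i + 1) (by omega) (by omega)
    have key : ∀ n, (Nat.choose i 0 : ℝ) *
        ((1 + ‖y n‖) ^ i * (‖iteratedFDeriv ℝ 0 G (y n)‖ *
          ‖iteratedFDeriv ℝ (i - 0 + 1) h (y n)‖)) ≤ C * wd y (i + 1) h n := by
      intro n
      have hg : ‖iteratedFDeriv ℝ 0 G (y n)‖ ≤ C * (1 + ‖y n‖) := by
        rw [norm_iteratedFDeriv_zero]; exact hC n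
      have : (Nat.choose i 0 : ℝ) = 1 := by simp
      rw [this, one_mul]
      have hit : i - 0 + 1 = i + 1 := by omega
      rw [hit]
      calc (1 + ‖y n‖) ^ i * (‖iteratedFDeriv ℝ 0 G (y n)‖ *
            ‖iteratedFDeriv ℝ (i + 1) h (y n)‖)
          = ‖iteratedFDeriv ℝ 0 G (y n)‖ *
              ((1 + ‖y n‖) ^ i * ‖iteratedFDeriv ℝ (i + 1) h (y n)‖) := by ring
        _ ≤ (C * (1 + ‖y n‖)) * ((1 + ‖y n‖) ^ i * ‖iteratedFDeriv ℝ (i + 1) h (y n)‖) :=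
            mul_le_mul_of_nonneg_right hg (by positivity)
        _ = C * wd y (i + 1) h n := by unfold wd; rw [pow_succ]; ring
    refine squeeze_zero (g := fun n => C * wd y (i+1) h n) (fun n => by positivity) key ?_
    simpa using hsm.const_mul C
  · -- 1 ≤ t ≤ i : use boundedness of weighted derivatives of G
    obtain ⟨C, hC⟩ := hG.bdd t htpos (le_trans htle (le_trans hi hq))
    have hsm := hh.small (i - t + 1) (by omega) (by omega)
    have key : ∀ n, (Nat.choose i t : ℝ) *
        ((1 + ‖y n‖) ^ i * (‖iteratedFDeriv ℝ t G (y n)‖ *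
          ‖iteratedFDeriv ℝ (i - t + 1) h (y n)‖)) ≤
        ((i.choose t : ℝ) * C) * wd y (i - t + 1) h n := by
      intro n
      have hpow : (1 + ‖y n‖ : ℝ) ^ i = (1 + ‖y n‖) ^ (t - 1) * (1 + ‖y n‖) ^ (i - t + 1) := by
        rw [← pow_add]; congr 1; omega
      have hgb : (1 + ‖y n‖) ^ (t - 1) * ‖iteratedFDeriv ℝ t G (y n)‖ ≤ C := hC n
      calc (Nat.choose i t : ℝ) * ((1 + ‖y n‖) ^ i * (‖iteratedFDeriv ℝ t G (y n)‖ *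
            ‖iteratedFDeriv ℝ (i - t + 1) h (y n)‖))
          = (i.choose t : ℝ) * (((1 + ‖y n‖) ^ (t - 1) * ‖iteratedFDeriv ℝ t G (y n)‖) *
              ((1 + ‖y n‖) ^ (i - t + 1) * ‖iteratedFDeriv ℝ (i - t + 1) h (y n)‖)) := by
            rw [hpow]; ring
        _ ≤ (i.choose t : ℝ) * (C * ((1 + ‖y n‖) ^ (i - t + 1) *
              ‖iteratedFDeriv ℝ (i - t + 1) h (y n)‖)) := by
            refine mul_le_mul_of_nonneg_left (mul_le_mul_of_nonneg_right hgb (by positivity))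
              (by positivity)
        _ = ((i.choose t : ℝ) * C) * wd y (i - t + 1) h n := by unfold wd; ring
    refine squeeze_zero (g := fun n => ((i.choose t : ℝ) * C) * wd y (i - t + 1) h n)
      (fun n => by positivity) key ?_
    simpa using hsm.const_mul ((i.choose t : ℝ) * C)

end Aux2
section Aux3
variable {E : Type*} [NormedAddCommGroup E] [NormedSpace ℝ E]
variable {y : ℕ → E} {K : ℕ} {G : E → E}

lemma hle2 (hG : HypGS y K G) {h : E → E} (hh : ContDiff ℝ (⊤ : ℕ∞) h) (i : ℕ) :
    ∀ n, wd y i (fun x => fderiv ℝ G x (h x)) n ≤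
      ∑ t ∈ Finset.range (i + 1), (i.choose t : ℝ) *
        (((1 + ‖y n‖) ^ t * ‖iteratedFDeriv ℝ t h (y n)‖) *
          ((1 + ‖y n‖) ^ (i - t) * ‖iteratedFDeriv ℝ (i - t + 1) G (y n)‖)) := by
  intro n
  have h1 := bound2 hG.smooth hh i (y n)
  calc wd y i (fun x => fderiv ℝ G x (h x)) n
      ≤ (1 + ‖y n‖) ^ i * ∑ t ∈ Finset.range (i + 1), (i.choose t : ℝ) *
          ‖iteratedFDeriv ℝ t h (y n)‖ * ‖iteratedFDeriv ℝ (i - t + 1) G (y n)‖ := by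
        unfold wd; exact mul_le_mul_of_nonneg_left h1 (by positivity)
    _ = _ := by
        rw [Finset.mul_sum]
        refine Finset.sum_congr rfl fun t ht => ?_
        have htle : t ≤ i := by simpa [Nat.lt_succ_iff] using Finset.mem_range.mp ht
        have hpow : (1 + ‖y n‖ : ℝ) ^ i = (1 + ‖y n‖) ^ t * (1 + ‖y n‖) ^ (i - t) := by
          rw [← pow_add]; congr 1; omega
        rw [hpow]; ring

/-- L2a : if `h` is small of order `q`, then `x ↦ DG(x)[h x]` is small of order `q`. -/
lemma SmallS.gderivApply (hG : HypGS y K G) {q : ℕ} (hqK : q + 1 ≤ K) {h : E → E}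
    (hh : SmallS y q h) : SmallS y q (fun x => fderiv ℝ G x (h x)) := by
  refine ⟨(hG.smooth.fderiv_right (by simp)).clm_apply hh.smooth, fun i hi => ?_⟩
  refine squeeze_zero (fun n => wd_nonneg _ _ _ _) (hle2 hG hh.smooth i) ?_
  have h0 : (0:ℝ) = ∑ t ∈ Finset.range (i+1), (0:ℝ) := by simp
  rw [h0]
  refine tendsto_finset_sum _ fun t ht => ?_
  have htle : t ≤ i := by simpa [Nat.lt_succ_iff] using Finset.mem_range.mp ht
  obtain ⟨C, hC⟩ := hG.bdd (i - t + 1) (by omega) (by omega)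
  have hCw : ∀ n, (1 + ‖y n‖) ^ (i - t) * ‖iteratedFDeriv ℝ (i - t + 1) G (y n)‖ ≤ C := by
    intro n; have := hC n
    rwa [show i - t + 1 - 1 = i - t from by omega] at this
  have hmul : Tendsto (fun n => ((1 + ‖y n‖) ^ t * ‖iteratedFDeriv ℝ t h (y n)‖) *
      ((1 + ‖y n‖) ^ (i - t) * ‖iteratedFDeriv ℝ (i - t + 1) G (y n)‖)) atTop (nhds 0) :=
    tendsto_mul_bdd (hh.small t (le_trans htle hi)) (fun n => wd_nonneg _ _ _ _)
      ⟨C, hCw⟩ (fun n => by positivity)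
  simpa using hmul.const_mul (i.choose t : ℝ)

/-- L2b : if `h` is flat of order `q+1`, then `x ↦ DG(x)[h x]` is flat of order `q`. -/
lemma FlatS.gderivApply (hG : HypGS y K G) {q : ℕ} (hqK : q + 1 ≤ K) {h : E → E}
    (hh : FlatS y (q + 1) h) : FlatS y q (fun x => fderiv ℝ G x (h x)) := by
  refine ⟨(hG.smooth.fderiv_right (by simp)).clm_apply hh.smooth, ?_, ?_⟩
  · -- boundedness
    intro i hi
    have hterms : ∀ t ∈ Finset.range (i+1), ∃ C, ∀ n, (i.choose t : ℝ) *
        (((1 + ‖y n‖) ^ t * ‖iteratedFDeriv ℝ t h (y n)‖) *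
          ((1 + ‖y n‖) ^ (i - t) * ‖iteratedFDeriv ℝ (i - t + 1) G (y n)‖)) ≤ C := by
      intro t ht
      have htle : t ≤ i := by simpa [Nat.lt_succ_iff] using Finset.mem_range.mp ht
      obtain ⟨C1, hC1⟩ := hh.bdd t (by omega)
      obtain ⟨C2, hC2⟩ := hG.bdd (i - t + 1) (by omega) (by omega)
      have hC1' : (0:ℝ) ≤ C1 := le_trans (wd_nonneg y t h 0) (hC1 0)
      refine ⟨(i.choose t : ℝ) * (C1 * C2), fun n => ?_⟩
      have hCw : (1 + ‖y n‖) ^ (i - t) * ‖iteratedFDeriv ℝ (i - t + 1) G (y n)‖ ≤ C2 := by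
        have := hC2 n
        rwa [show i - t + 1 - 1 = i - t from by omega] at this
      refine mul_le_mul_of_nonneg_left ?_ (by positivity)
      refine mul_le_mul (hC1 n) hCw (by positivity) hC1'
    obtain ⟨C, hC⟩ := bdd_sum (Finset.range (i+1)) _ hterms
    exact ⟨C, fun n => (hle2 hG hh.smooth i n).trans (hC n)⟩
  · -- smallness
    intro i hi1 hi
    refine squeeze_zero (fun n => wd_nonneg _ _ _ _) (hle2 hG hh.smooth i) ?_
    have h0 : (0:ℝ) = ∑ t ∈ Finset.range (i+1), (0:ℝ) := by simp
    rw [h0]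
    refine tendsto_finset_sum _ fun t ht => ?_
    have htle : t ≤ i := by simpa [Nat.lt_succ_iff] using Finset.mem_range.mp ht
    rcases Nat.eq_zero_or_pos t with rfl | htpos
    · -- t = 0 : h-factor bounded, G-factor small (order i+1 ≥ 2)
      obtain ⟨C1, hC1⟩ := hh.bdd 0 (by omega)
      have hGsm := hG.small (i - 0 + 1) (by omega) (by omega)
      have hGsm' : Tendsto (fun n => (1 + ‖y n‖) ^ (i - 0) *
          ‖iteratedFDeriv ℝ (i - 0 + 1) G (y n)‖) atTop (nhds 0) := by
        have he : i - 0 + 1 - 1 = i - 0 := by omega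
        simpa [he] using hGsm
      have hmul : Tendsto (fun n => ((1 + ‖y n‖) ^ (i - 0) *
          ‖iteratedFDeriv ℝ (i - 0 + 1) G (y n)‖) *
          ((1 + ‖y n‖) ^ 0 * ‖iteratedFDeriv ℝ 0 h (y n)‖)) atTop (nhds 0) :=
        tendsto_mul_bdd hGsm' (fun n => by positivity) ⟨C1, hC1⟩ (fun n => wd_nonneg _ _ _ _)
      have hmul' := hmul.const_mul (i.choose 0 : ℝ)
      rw [mul_zero] at hmul'
      refine hmul'.congr fun n => by ring
    · -- t ≥ 1 : h-factor small, G-factor bounded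
      obtain ⟨C2, hC2⟩ := hG.bdd (i - t + 1) (by omega) (by omega)
      have hCw : ∀ n, (1 + ‖y n‖) ^ (i - t) * ‖iteratedFDeriv ℝ (i - t + 1) G (y n)‖ ≤ C2 := by
        intro n; have := hC2 n
        rwa [show i - t + 1 - 1 = i - t from by omega] at this
      have hmul : Tendsto (fun n => ((1 + ‖y n‖) ^ t * ‖iteratedFDeriv ℝ t h (y n)‖) *
          ((1 + ‖y n‖) ^ (i - t) * ‖iteratedFDeriv ℝ (i - t + 1) G (y n)‖)) atTop (nhds 0) :=
        tendsto_mul_bdd (hh.small t htpos (by omega)) (fun n => wd_nonneg _ _ _ _)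
          ⟨C2, hCw⟩ (fun n => by positivity)
      simpa using hmul.const_mul (i.choose t : ℝ)

end Aux3
section Aux4
variable {E : Type*} [NormedAddCommGroup E] [NormedSpace ℝ E]
variable {y : ℕ → E}

lemma SmallS.add {q : ℕ} {f g : E → E} (hf : SmallS y q f) (hg : SmallS y q g) :
    SmallS y q (fun x => f x + g x) := by
  refine ⟨hf.smooth.add hg.smooth, fun i hi => ?_⟩
  have hle : ∀ n, wd y i (fun x => f x + g x) n ≤ wd y i f n + wd y i g n := by
    intro n
    unfold wd
    rw [iteratedFDeriv_add_apply' (hf.smooth.contDiffAt.of_le (by exact_mod_cast le_top)) (hg.smooth.contDiffAt.of_le (by exact_mod_cast le_top))]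
    calc (1 + ‖y n‖) ^ i * ‖iteratedFDeriv ℝ i f (y n) + iteratedFDeriv ℝ i g (y n)‖
        ≤ (1 + ‖y n‖) ^ i * (‖iteratedFDeriv ℝ i f (y n)‖ + ‖iteratedFDeriv ℝ i g (y n)‖) :=
          mul_le_mul_of_nonneg_left (norm_add_le _ _) (by positivity)
      _ = _ := by ring
  refine squeeze_zero (fun n => wd_nonneg _ _ _ _) hle ?_
  simpa using (hf.small i hi).add (hg.small i hi)

lemma SmallS.csmul {q : ℕ} {f : E → E} (c : ℝ) (hf : SmallS y q f) :
    SmallS y q (fun x => c • f x) := by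
  refine ⟨hf.smooth.const_smul c, fun i hi => ?_⟩
  have heq : ∀ n, wd y i (fun x => c • f x) n = |c| * wd y i f n := by
    intro n
    unfold wd
    rw [iteratedFDeriv_const_smul_apply' (hf.smooth.contDiffAt.of_le (by exact_mod_cast le_top))]
    rw [norm_smul c (iteratedFDeriv ℝ i f (y n)), Real.norm_eq_abs]
    ring
  have := (hf.small i hi).const_mul |c|
  rw [mul_zero] at this
  exact this.congr fun n => (heq n).symm

lemma SmallS.sub' {q : ℕ} {f g : E → E} (hf : SmallS y q f) (hg : SmallS y q g) :
    SmallS y q (fun x => f x - g x) := by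
  have h := hf.add (hg.csmul (-1))
  have heq : (fun x => f x - g x) = fun x => f x + (-1 : ℝ) • g x := by
    funext x; simp [sub_eq_add_neg]
  rw [heq]
  exact h

lemma flatS_const (q : ℕ) (c : E) : FlatS y q (fun _ => c) := by
  refine ⟨contDiff_const, fun i _ => ⟨‖c‖, fun n => ?_⟩, fun i hi _ => ?_⟩
  · cases i with
    | zero => simp [wd, norm_iteratedFDeriv_zero]
    | succ m =>
      have h0 : iteratedFDeriv ℝ (m+1) (fun _ : E => c) = 0 :=
        iteratedFDeriv_const_of_ne (Nat.succ_ne_zero m) c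
      simp [wd, h0, norm_nonneg]
  · have h0 : iteratedFDeriv ℝ i (fun _ : E => c) = 0 :=
      iteratedFDeriv_const_of_ne (by omega) c
    have : wd y i (fun _ : E => c) = fun _ => 0 := by
      funext n; simp [wd, h0]
    rw [this]
    exact tendsto_const_nhds

lemma smallS_zero (q : ℕ) : SmallS y q (fun _ : E => (0 : E)) := by
  refine ⟨contDiff_const, fun i _ => ?_⟩
  cases i with
  | zero =>
    have : wd y 0 (fun _ : E => (0:E)) = fun _ => 0 := by
      funext n; simp [wd, norm_iteratedFDeriv_zero]
    rw [this]; exact tendsto_const_nhds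
  | succ m =>
    have h0 : iteratedFDeriv ℝ (m+1) (fun _ : E => (0:E)) = 0 :=
      iteratedFDeriv_const_of_ne (Nat.succ_ne_zero m) 0
    have : wd y (m+1) (fun _ : E => (0:E)) = fun _ => 0 := by
      funext n; simp [wd, h0]
    rw [this]; exact tendsto_const_nhds

lemma lieIter_contDiff {G : E → E} (hG : ContDiff ℝ (⊤ : ℕ∞) G) (b : E) (j : ℕ) :
    ContDiff ℝ (⊤ : ℕ∞) (lieIter G b j) := by
  induction j with
  | zero => exact contDiff_const
  | succ j ih =>
    show ContDiff ℝ (⊤ : ℕ∞) fun x => fderiv ℝ (lieIter G b j) x (G x) - fderiv ℝ G x (lieIter G b j x)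
    exact ((ih.fderiv_right (by simp)).clm_apply hG).sub ((hG.fderiv_right (by simp)).clm_apply ih)

end Aux4
section Main
variable {E : Type*} [NormedAddCommGroup E] [NormedSpace ℝ E]

lemma main_induction {y : ℕ → E} {K : ℕ} {G : E → E} (hG : HypGS y K G) (b : E) :
    ∀ j, j ≤ K →
      FlatS y (K - j) (fun x => ((fderiv ℝ G x) ^ j) b) ∧
      SmallS y (K - j) (fun x => lieIter G b j x - ((-1:ℝ) ^ j) • (((fderiv ℝ G x) ^ j) b)) := by
  intro j
  induction j with
  | zero =>
    intro _
    constructor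
    · have h1 : (fun x : E => ((fderiv ℝ G x) ^ 0) b) = fun _ => b := by
        funext x; simp
      rw [h1]; exact flatS_const _ b
    · have h2 : (fun x : E => lieIter G b 0 x - ((-1:ℝ) ^ 0) • (((fderiv ℝ G x) ^ 0) b))
          = fun _ => (0 : E) := by
        funext x; simp [lieIter]
      rw [h2]; exact smallS_zero _
  | succ j ih =>
    intro hjK
    obtain ⟨hM, hE⟩ := ih (by omega)
    set Mf : E → E := fun x => ((fderiv ℝ G x) ^ j) b with hMf
    set Ef : E → E := fun x => lieIter G b j x - ((-1:ℝ) ^ j) • Mf x with hEf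
    have hq1 : K - (j + 1) + 1 = K - j := by omega
    have hMfun : (fun x : E => ((fderiv ℝ G x) ^ (j+1)) b) = fun x => fderiv ℝ G x (Mf x) := by
      funext x
    
      rw [pow_succ']
      rfl
    have hMd : Differentiable ℝ Mf := hM.smooth.differentiable (by simp)
    have hEd : Differentiable ℝ Ef := hE.smooth.differentiable (by simp)
    have hLd : Differentiable ℝ (lieIter G b j) :=
      (lieIter_contDiff hG.smooth b j).differentiable (by simp)
    constructor
    · -- Flat part
      rw [hMfun]
      have hM' : FlatS y (K - (j+1) + 1) Mf := by rwa [hq1]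
      exact hM'.gderivApply hG (by omega)
    · -- Small part
      have hkey : (fun x => lieIter G b (j+1) x - ((-1:ℝ) ^ (j+1)) • (((fderiv ℝ G x) ^ (j+1)) b))
          = fun x => (fderiv ℝ Ef x (G x) + ((-1:ℝ) ^ j) • (fderiv ℝ Mf x (G x)))
              - fderiv ℝ G x (Ef x) := by
        funext x
        have h1 : lieIter G b j = fun z => Ef z + ((-1:ℝ) ^ j) • Mf z := by
          funext z; rw [hEf]; simp
        have h2 : fderiv ℝ (lieIter G b j) x
            = fderiv ℝ Ef x + ((-1:ℝ) ^ j) • fderiv ℝ Mf x := by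
          conv_lhs => rw [h1]
          rw [fderiv_fun_add (hEd x) ((hMd x).fun_const_smul _), fderiv_fun_const_smul (hMd x)]
        have h3 : lieIter G b (j+1) x
            = fderiv ℝ (lieIter G b j) x (G x) - fderiv ℝ G x (lieIter G b j x) := rfl
        have h4 : lieIter G b j x = Ef x + ((-1:ℝ) ^ j) • Mf x := by rw [hEf]; simp
        have h5 : ((fderiv ℝ G x) ^ (j+1)) b = fderiv ℝ G x (Mf x) := by
          rw [pow_succ']; rfl
        rw [h3, h2, h4, h5]
        simp only [ContinuousLinearMap.add_apply, ContinuousLinearMap.coe_smul',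
          Pi.smul_apply, map_add, map_smul, pow_succ]
        module
      rw [hkey]
      have hE' : FlatS y (K - (j+1) + 1) Ef := by rw [hq1]; exact hE.toFlat
      have hM' : FlatS y (K - (j+1) + 1) Mf := by rwa [hq1]
      have S1 : SmallS y (K - (j+1)) (fun x => fderiv ℝ Ef x (G x)) :=
        hE'.derivApplyG hG (by omega)
      have S2 : SmallS y (K - (j+1)) (fun x => ((-1:ℝ) ^ j) • (fderiv ℝ Mf x (G x))) :=
        (hM'.derivApplyG hG (by omega)).csmul _
      have S3 : SmallS y (K - (j+1)) (fun x => fderiv ℝ G x (Ef x)) :=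
        (hE.mono (by omega)).gderivApply hG (by omega)
      exact (S1.add S2).sub' S3

end Main

/-- With `G x = A x + F x` for a smooth globally Lipschitz `F`, and a sequence
`(yⁿ)` bounded away from `0` along which `|yⁿ|^{j−1} ‖D^j F(yⁿ)‖ → 0` for `j = 1, …, k`, one has
`|(ℒ_G^k b)(yⁿ) − (−1)^k (DG(yⁿ))^k b| → 0`. -/
theorem stmt9 {d : ℕ} (A : Matrix (Fin d) (Fin d) ℝ)
    (F : EuclideanSpace ℝ (Fin d) → EuclideanSpace ℝ (Fin d))
    (hFs : ContDiff ℝ (⊤ : ℕ∞) F) (hFlip : ∃ L : NNReal, LipschitzWith L F)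
    (G : EuclideanSpace ℝ (Fin d) → EuclideanSpace ℝ (Fin d))
    (hG : G = fun x => Matrix.toEuclideanLin A x + F x)
    (b : EuclideanSpace ℝ (Fin d)) (k : ℕ)
    (y : ℕ → EuclideanSpace ℝ (Fin d))
    (hy : ∃ ε > (0:ℝ), ∀ n, ε ≤ ‖y n‖)
    (hdecay : ∀ j : ℕ, 1 ≤ j → j ≤ k →
      Tendsto (fun n => ‖y n‖ ^ (j - 1) * ‖iteratedFDeriv ℝ j F (y n)‖) atTop (nhds 0)) :
    Tendsto (fun n =>
        ‖lieIter G b k (y n) - ((-1:ℝ) ^ k) • (((fderiv ℝ G (y n)) ^ k) b)‖)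
      atTop (nhds 0) := by
  classical
  obtain ⟨ε, hε, hεy⟩ := hy
  obtain ⟨L, hL⟩ := hFlip
  set A' : EuclideanSpace ℝ (Fin d) →L[ℝ] EuclideanSpace ℝ (Fin d) :=
    LinearMap.toContinuousLinearMap (Matrix.toEuclideanLin A) with hA'
  have hGdef : G = fun x => A' x + F x := by
    rw [hG]; funext x; simp [hA']
  have hGs : ContDiff ℝ (⊤ : ℕ∞) G := by rw [hGdef]; exact (A'.contDiff).add hFs
  have hFd : Differentiable ℝ F := hFs.differentiable (by simp)
  have hfd : ∀ x, fderiv ℝ G x = A' + fderiv ℝ F x := by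
    intro x
    rw [hGdef, fderiv_fun_add (A'.differentiableAt) (hFd x), A'.fderiv]
  have hfdF : ∀ x, ‖fderiv ℝ F x‖ ≤ L := fun x => norm_fderiv_le_of_lipschitz ℝ hL
  -- higher derivatives of G coincide with those of F
  have hiG : ∀ (i : ℕ), 2 ≤ i → ∀ x, ‖iteratedFDeriv ℝ i G x‖ = ‖iteratedFDeriv ℝ i F x‖ := by
    intro i hi x
    obtain ⟨m, rfl⟩ : ∃ m, i = m + 1 := ⟨i - 1, by omega⟩
    rw [← norm_iteratedFDeriv_fderiv, ← norm_iteratedFDeriv_fderiv]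
    have hfun : fderiv ℝ G = fun z => A' + fderiv ℝ F z := funext hfd
    rw [hfun]
    rw [iteratedFDeriv_add_apply' (contDiff_const.contDiffAt.of_le le_top)
      ((hFs.fderiv_right (m := ((⊤ : ℕ∞) : WithTop ℕ∞)) (by simp)).contDiffAt.of_le (by exact_mod_cast le_top))]
    rw [iteratedFDeriv_const_of_ne (show m ≠ 0 by omega) A']
    simp
  -- weight comparison
  have hc : ∀ n, (1 + ‖y n‖ : ℝ) ≤ ((1 + ε) / ε) * ‖y n‖ := by
    intro n
    have h1 := hεy n
    rw [div_mul_eq_mul_div, le_div_iff₀ hε]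
    nlinarith
  have hsmallG : ∀ i, 2 ≤ i → i ≤ k → Tendsto
      (fun n => (1 + ‖y n‖) ^ (i - 1) * ‖iteratedFDeriv ℝ i G (y n)‖) atTop (nhds 0) := by
    intro i h2 hik
    have hd := hdecay i (by omega) hik
    have hdc := hd.const_mul (((1 + ε) / ε) ^ (i - 1))
    rw [mul_zero] at hdc
    refine squeeze_zero (fun n => by positivity) (fun n => ?_) hdc
    rw [hiG i h2 (y n)]
    have h1 : (1 + ‖y n‖ : ℝ) ^ (i - 1) ≤ ((1 + ε) / ε) ^ (i - 1) * ‖y n‖ ^ (i - 1) := by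
      rw [← mul_pow]; exact pow_le_pow_left₀ (by positivity) (hc n) _
    calc (1 + ‖y n‖) ^ (i - 1) * ‖iteratedFDeriv ℝ i F (y n)‖
        ≤ (((1 + ε) / ε) ^ (i - 1) * ‖y n‖ ^ (i - 1)) * ‖iteratedFDeriv ℝ i F (y n)‖ :=
          mul_le_mul_of_nonneg_right h1 (norm_nonneg _)
      _ = ((1 + ε) / ε) ^ (i - 1) * (‖y n‖ ^ (i - 1) * ‖iteratedFDeriv ℝ i F (y n)‖) := by ring
  have hHyp : HypGS y k G := by
    refine ⟨hGs, ⟨‖A'‖ + ((L : ℝ) + ‖F 0‖), fun n => ?_⟩, ?_, hsmallG⟩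
    · -- linear growth
      have h1 : ‖F (y n)‖ ≤ (L : ℝ) * ‖y n‖ + ‖F 0‖ := by
        have h2 := hL.dist_le_mul (y n) 0
        rw [dist_eq_norm, dist_eq_norm, sub_zero] at h2
        calc ‖F (y n)‖ = ‖(F (y n) - F 0) + F 0‖ := by rw [sub_add_cancel]
          _ ≤ ‖F (y n) - F 0‖ + ‖F 0‖ := norm_add_le _ _
          _ ≤ (L : ℝ) * ‖y n‖ + ‖F 0‖ := add_le_add_left h2 _
      have h3 : ‖G (y n)‖ ≤ ‖A'‖ * ‖y n‖ + ‖F (y n)‖ := by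
        rw [hGdef]
        exact (norm_add_le _ _).trans (add_le_add_left (A'.le_opNorm _) _)
      have h4 : (0:ℝ) ≤ ‖y n‖ := norm_nonneg _
      have h5 : (0:ℝ) ≤ ‖A'‖ := norm_nonneg _
      have h6 : (0:ℝ) ≤ (L : ℝ) := L.coe_nonneg
      have h7 : (0:ℝ) ≤ ‖F 0‖ := norm_nonneg _
      nlinarith
    · -- bdd
      intro i h1 hik
      rcases Nat.lt_or_ge i 2 with h2 | h2
      · -- i = 1
        have hieq : i = 1 := by omega
        subst hieq
        refine ⟨‖A'‖ + (L : ℝ), fun n => ?_⟩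
        have he : ‖iteratedFDeriv ℝ 1 G (y n)‖ = ‖fderiv ℝ G (y n)‖ := by
          rw [← norm_iteratedFDeriv_fderiv, norm_iteratedFDeriv_zero]
        simp only [show (1:ℕ) - 1 = 0 from rfl, pow_zero, one_mul, he]
        rw [hfd]
        exact (norm_add_le _ _).trans (add_le_add_right (hfdF _) _)
      · exact bdd_of_tendsto (hsmallG i h2 hik)
  obtain ⟨-, hSmall⟩ := main_induction hHyp b k le_rfl
  have hfin := hSmall.small 0 (by omega)
  have heq : wd y 0 (fun x => lieIter G b k x - ((-1:ℝ) ^ k) • (((fderiv ℝ G x) ^ k) b))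
      = fun n => ‖lieIter G b k (y n) - ((-1:ℝ) ^ k) • (((fderiv ℝ G (y n)) ^ k) b)‖ := by
    funext n
    rw [wd, pow_zero, one_mul, norm_iteratedFDeriv_zero]
  rwa [heq] at hfin
end

section
/- Let I and J be finite sets. Let ω : ℝ^I → ℝ^I be an invertible linear map, Λ : ℝ^J → ℝ^I an injective linear map, ι : ℝ^J → ℝ^J an invertible linear map, and ϑ : ℝ^J → ℝ^J a symmetric positive definite linear map with positive square root ϑ^{1/2}. Define linear maps A : ℝ^J ⊕ ℝ^I ⊕ ℝ^I → ℝ^J ⊕ ℝ^I ⊕ ℝ^I and B : ℝ^J → ℝ^J ⊕ ℝ^I ⊕ ℝ^I by the block formulas A(r, p, u) = (−(1/2) ι ι* r − Λ* p, Λ r − ω* u, ω p) and B v = (ι ϑ^{1/2} v, 0, 0). If the pair (ω*ω, Λ) satisfies the Kalman condition (i.e. the ranges of (ω*ω)^k Λ for k = 0, 1, 2, … together span ℝ^I), then the pair (A, B) also satisfies the Kalman condition (i.e. the ranges of A^k B for k = 0, 1, 2, … together span ℝ^J ⊕ ℝ^I ⊕ ℝ^I). -/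
open scoped RealInnerProductSpace

namespace Stmt12Aux

variable {I J : Type*} [Fintype I] [Fintype J]

/-- The pairing on the product space. -/
noncomputable def pr (x y : EuclideanSpace ℝ J × EuclideanSpace ℝ I × EuclideanSpace ℝ I) : ℝ :=
  ⟪x.1, y.1⟫ + ⟪x.2.1, y.2.1⟫ + ⟪x.2.2, y.2.2⟫

/-- The explicit "adjoint" of the block map `A` with respect to `pr`. -/
noncomputable def adjA (ω : EuclideanSpace ℝ I →ₗ[ℝ] EuclideanSpace ℝ I)
    (Λ : EuclideanSpace ℝ J →ₗ[ℝ] EuclideanSpace ℝ I)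
    (ι : EuclideanSpace ℝ J →ₗ[ℝ] EuclideanSpace ℝ J)
    (y : EuclideanSpace ℝ J × EuclideanSpace ℝ I × EuclideanSpace ℝ I) :
    EuclideanSpace ℝ J × EuclideanSpace ℝ I × EuclideanSpace ℝ I :=
  (-(1/2 : ℝ) • ι (LinearMap.adjoint ι y.1) + LinearMap.adjoint Λ y.2.1,
   -(Λ y.1) + LinearMap.adjoint ω y.2.2,
   -(ω y.2.1))

variable (ω : EuclideanSpace ℝ I →ₗ[ℝ] EuclideanSpace ℝ I)
    (Λ : EuclideanSpace ℝ J →ₗ[ℝ] EuclideanSpace ℝ I)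
    (ι : EuclideanSpace ℝ J →ₗ[ℝ] EuclideanSpace ℝ J)
    (ϑhalf : EuclideanSpace ℝ J →ₗ[ℝ] EuclideanSpace ℝ J)
    (A : (EuclideanSpace ℝ J × EuclideanSpace ℝ I × EuclideanSpace ℝ I) →ₗ[ℝ]
         (EuclideanSpace ℝ J × EuclideanSpace ℝ I × EuclideanSpace ℝ I))
    (B : EuclideanSpace ℝ J →ₗ[ℝ]
         (EuclideanSpace ℝ J × EuclideanSpace ℝ I × EuclideanSpace ℝ I))

theorem pr_adj
    (hA : ∀ (r : EuclideanSpace ℝ J) (p u : EuclideanSpace ℝ I),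
      A (r, p, u) =
        (-(1/2 : ℝ) • ι (LinearMap.adjoint ι r) - LinearMap.adjoint Λ p,
          Λ r - LinearMap.adjoint ω u,
          ω p))
    (x y : EuclideanSpace ℝ J × EuclideanSpace ℝ I × EuclideanSpace ℝ I) :
    pr (A x) y = pr x (adjA ω Λ ι y) := by
  obtain ⟨r, p, u⟩ := x
  obtain ⟨a, b, c⟩ := y
  rw [hA]
  have h1 : ⟪ι (LinearMap.adjoint ι r), a⟫ = ⟪r, ι (LinearMap.adjoint ι a)⟫ := by
    rw [← LinearMap.adjoint_inner_right ι (LinearMap.adjoint ι r) a,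
      ← LinearMap.adjoint_inner_left ι (LinearMap.adjoint ι a) r]
  simp only [pr, adjA, inner_sub_left, inner_add_right, real_inner_smul_left,
    real_inner_smul_right, inner_neg_left, inner_neg_right,
    LinearMap.adjoint_inner_left, LinearMap.adjoint_inner_right, h1]
  ring

theorem pr_pow
    (hA : ∀ (r : EuclideanSpace ℝ J) (p u : EuclideanSpace ℝ I),
      A (r, p, u) =
        (-(1/2 : ℝ) • ι (LinearMap.adjoint ι r) - LinearMap.adjoint Λ p,
          Λ r - LinearMap.adjoint ω u,
          ω p))
    (k : ℕ) (x y : EuclideanSpace ℝ J × EuclideanSpace ℝ I × EuclideanSpace ℝ I) :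
    pr ((A ^ k) x) y = pr x ((adjA ω Λ ι)^[k] y) := by
  induction k generalizing x y with
  | zero => simp
  | succ k ih =>
    rw [pow_succ, Module.End.mul_apply, ih, Function.iterate_succ_apply',
      ← pr_adj ω Λ ι A hA]

theorem pr_B (hhalfsymm : LinearMap.IsSymmetric ϑhalf)
    (hB : ∀ v : EuclideanSpace ℝ J, B v = (ι (ϑhalf v), 0, 0))
    (v : EuclideanSpace ℝ J)
    (y : EuclideanSpace ℝ J × EuclideanSpace ℝ I × EuclideanSpace ℝ I) :
    pr (B v) y = ⟪v, ϑhalf (LinearMap.adjoint ι y.1)⟫ := by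
  rw [hB]
  simp only [pr, inner_zero_left, add_zero]
  rw [← LinearMap.adjoint_inner_right ι (ϑhalf v) y.1, hhalfsymm]

end Stmt12Aux

open Stmt12Aux in
/-- For the semi-Markovian network matrices
`A (r,p,u) = (−½ ι ι* r − Λ* p, Λ r − ω* u, ω p)` and `B v = (ι ϑ^{1/2} v, 0, 0)`,
the Kalman condition for `(ω*ω, Λ)` implies the Kalman condition for `(A, B)`. -/
theorem stmt12 {I J : Type*} [Fintype I] [Fintype J] [DecidableEq I] [DecidableEq J]
    (ω : EuclideanSpace ℝ I →ₗ[ℝ] EuclideanSpace ℝ I) (hω : Function.Bijective ω)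
    (Λ : EuclideanSpace ℝ J →ₗ[ℝ] EuclideanSpace ℝ I) (hΛ : Function.Injective Λ)
    (ι : EuclideanSpace ℝ J →ₗ[ℝ] EuclideanSpace ℝ J) (hι : Function.Bijective ι)
    (ϑ ϑhalf : EuclideanSpace ℝ J →ₗ[ℝ] EuclideanSpace ℝ J)
    (hϑsymm : LinearMap.IsSymmetric ϑ)
    (hϑpos : ∀ v : EuclideanSpace ℝ J, v ≠ 0 → 0 < ⟪ϑ v, v⟫)
    (hhalfsymm : LinearMap.IsSymmetric ϑhalf)
    (hhalfpos : ∀ v : EuclideanSpace ℝ J, v ≠ 0 → 0 < ⟪ϑhalf v, v⟫)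
    (hsq : ϑhalf ∘ₗ ϑhalf = ϑ)
    (A : (EuclideanSpace ℝ J × EuclideanSpace ℝ I × EuclideanSpace ℝ I) →ₗ[ℝ]
         (EuclideanSpace ℝ J × EuclideanSpace ℝ I × EuclideanSpace ℝ I))
    (B : EuclideanSpace ℝ J →ₗ[ℝ]
         (EuclideanSpace ℝ J × EuclideanSpace ℝ I × EuclideanSpace ℝ I))
    (hA : ∀ (r : EuclideanSpace ℝ J) (p u : EuclideanSpace ℝ I),
      A (r, p, u) =
        (-(1/2 : ℝ) • ι (LinearMap.adjoint ι r) - LinearMap.adjoint Λ p,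
          Λ r - LinearMap.adjoint ω u,
          ω p))
    (hB : ∀ v : EuclideanSpace ℝ J, B v = (ι (ϑhalf v), 0, 0))
    (hKalman : ⨆ k : ℕ,
        LinearMap.range (((LinearMap.adjoint ω ∘ₗ ω) ^ k) ∘ₗ Λ) = ⊤) :
    ⨆ k : ℕ, LinearMap.range ((A ^ k) ∘ₗ B) = ⊤ := by
  classical
  -- injectivity helpers
  have hhalf_inj : ∀ v : EuclideanSpace ℝ J, ϑhalf v = 0 → v = 0 := by
    intro v hv
    by_contra h
    have := hhalfpos v h
    rw [hv, inner_zero_left] at this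
    exact lt_irrefl 0 this
  have hιadj_inj : ∀ a : EuclideanSpace ℝ J, LinearMap.adjoint ι a = 0 → a = 0 := by
    intro a ha
    obtain ⟨v, hv⟩ := hι.2 a
    have h1 : ⟪a, ι v⟫ = 0 := by
      rw [← LinearMap.adjoint_inner_left, ha, inner_zero_left]
    rw [hv] at h1
    exact inner_self_eq_zero.mp h1
  have hωadj_inj : ∀ a : EuclideanSpace ℝ I, LinearMap.adjoint ω a = 0 → a = 0 := by
    intro a ha
    obtain ⟨v, hv⟩ := hω.2 a
    have h1 : ⟪a, ω v⟫ = 0 := by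
      rw [← LinearMap.adjoint_inner_left, ha, inner_zero_left]
    rw [hv] at h1
    exact inner_self_eq_zero.mp h1
  -- consequence of the Kalman condition for (ω*ω, Λ)
  have hM : ∀ x : EuclideanSpace ℝ I,
      (∀ k : ℕ, LinearMap.adjoint Λ (((LinearMap.adjoint ω ∘ₗ ω) ^ k) x) = 0) → x = 0 := by
    intro x hx
    have hmem : x ∈ (⨆ k : ℕ,
        LinearMap.range (((LinearMap.adjoint ω ∘ₗ ω) ^ k) ∘ₗ Λ))ᗮ := by
      rw [← Submodule.iInf_orthogonal]
      refine (Submodule.mem_iInf _).mpr fun k => ?_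
      rw [Submodule.mem_orthogonal]
      rintro u ⟨z, rfl⟩
      have hsa : LinearMap.adjoint ((LinearMap.adjoint ω ∘ₗ ω) ^ k)
          = (LinearMap.adjoint ω ∘ₗ ω) ^ k := by
        rw [← LinearMap.star_eq_adjoint, star_pow, LinearMap.star_eq_adjoint,
          LinearMap.adjoint_comp, LinearMap.adjoint_adjoint]
      rw [LinearMap.comp_apply, ← hsa, LinearMap.adjoint_inner_left,
        ← LinearMap.adjoint_inner_right, hx k, inner_zero_right]
    rw [hKalman, Submodule.top_orthogonal_eq_bot] at hmem
    simpa using hmem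
  -- the key orthogonality lemma
  have key : ∀ w : EuclideanSpace ℝ J × EuclideanSpace ℝ I × EuclideanSpace ℝ I,
      (∀ (k : ℕ) (v : EuclideanSpace ℝ J), pr (((A ^ k) ∘ₗ B) v) w = 0) → w = 0 := by
    intro w H
    set g : ℕ → EuclideanSpace ℝ J × EuclideanSpace ℝ I × EuclideanSpace ℝ I :=
      fun k => (adjA ω Λ ι)^[k] w with hg
    have hg1 : ∀ k, (g k).1 = 0 := by
      intro k
      have h1 : ∀ v, ⟪v, ϑhalf (LinearMap.adjoint ι (g k).1)⟫ = 0 := by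
        intro v
        have := H k v
        rw [LinearMap.comp_apply, pr_pow ω Λ ι A hA,
          pr_B ι ϑhalf B hhalfsymm hB] at this
        exact this
      have h2 := h1 (ϑhalf (LinearMap.adjoint ι (g k).1))
      rw [inner_self_eq_zero] at h2
      exact hιadj_inj _ (hhalf_inj _ h2)
    have hgsucc : ∀ k, g (k + 1) = adjA ω Λ ι (g k) := fun k =>
      Function.iterate_succ_apply' (adjA ω Λ ι) k w
    have hgfst : ∀ k, LinearMap.adjoint Λ ((g k).2.1) = 0 := by
      intro k
      have h1 := hg1 (k + 1)
      rw [hgsucc k] at h1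
      simp only [adjA, hg1 k, map_zero, smul_zero, zero_add] at h1
      exact h1
    have hg21 : ∀ k, (g (k + 1)).2.1 = LinearMap.adjoint ω ((g k).2.2) := by
      intro k
      rw [hgsucc k]
      simp only [adjA, hg1 k, map_zero, neg_zero, zero_add]
    have hg22 : ∀ k, (g (k + 1)).2.2 = -(ω ((g k).2.1)) := by
      intro k
      rw [hgsucc k]
      rfl
    have hgrec : ∀ k, (g (k + 2)).2.1
        = -((LinearMap.adjoint ω ∘ₗ ω) ((g k).2.1)) := by
      intro k
      rw [show k + 2 = (k + 1) + 1 by ring, hg21, hg22, map_neg]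
      rfl
    have hpowg : ∀ (k j : ℕ), ((LinearMap.adjoint ω ∘ₗ ω) ^ k) ((g j).2.1)
        = ((-1 : ℝ) ^ k) • (g (j + 2 * k)).2.1 := by
      intro k
      induction k with
      | zero => intro j; simp
      | succ k ih =>
        intro j
        have hMx : (LinearMap.adjoint ω ∘ₗ ω) ((g j).2.1) = -((g (j + 2)).2.1) := by
          rw [hgrec j, neg_neg]
        rw [pow_succ, Module.End.mul_apply, hMx, map_neg, ih (j + 2),
          show j + 2 + 2 * k = j + 2 * (k + 1) by ring,
          show ((-1 : ℝ) ^ (k + 1)) = -((-1 : ℝ) ^ k) by ring, neg_smul]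
    have hall : ∀ j, (g j).2.1 = 0 := by
      intro j
      refine hM _ fun k => ?_
      rw [hpowg k j, map_smul, hgfst, smul_zero]
    have ha : w.1 = 0 := hg1 0
    have hb : w.2.1 = 0 := hall 0
    have hc : w.2.2 = 0 := by
      have h1 := hall 1
      rw [show (1 : ℕ) = 0 + 1 from rfl, hg21 0] at h1
      exact hωadj_inj _ h1
    exact Prod.ext ha (Prod.ext hb hc)
  -- conclude via duality
  by_contra hne
  have hlt : (⨆ k : ℕ, LinearMap.range ((A ^ k) ∘ₗ B)) < ⊤ := lt_top_iff_ne_top.mpr hne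
  obtain ⟨f, hf0, hfmap⟩ := Submodule.exists_dual_map_eq_bot_of_lt_top hlt inferInstance
  have hfS : ∀ x ∈ (⨆ k : ℕ, LinearMap.range ((A ^ k) ∘ₗ B)), f x = 0 := by
    intro x hx
    have h1 : f x ∈ Submodule.map f (⨆ k : ℕ, LinearMap.range ((A ^ k) ∘ₗ B)) :=
      Submodule.mem_map_of_mem hx
    rw [hfmap] at h1
    simpa using h1
  -- Riesz representation of the three components of f
  set a : EuclideanSpace ℝ J := (InnerProductSpace.toDual ℝ (EuclideanSpace ℝ J)).symm
    (LinearMap.toContinuousLinearMap (f ∘ₗ LinearMap.inl ℝ _ _)) with ha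
  set b : EuclideanSpace ℝ I := (InnerProductSpace.toDual ℝ (EuclideanSpace ℝ I)).symm
    (LinearMap.toContinuousLinearMap (f ∘ₗ (LinearMap.inr ℝ (EuclideanSpace ℝ J) _) ∘ₗ
      LinearMap.inl ℝ _ (EuclideanSpace ℝ I))) with hb
  set c : EuclideanSpace ℝ I := (InnerProductSpace.toDual ℝ (EuclideanSpace ℝ I)).symm
    (LinearMap.toContinuousLinearMap (f ∘ₗ (LinearMap.inr ℝ (EuclideanSpace ℝ J) _) ∘ₗ
      LinearMap.inr ℝ (EuclideanSpace ℝ I) _)) with hc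
  have ha_spec : ∀ r : EuclideanSpace ℝ J, ⟪a, r⟫ = f (r, 0, 0) := by
    intro r
    rw [ha, InnerProductSpace.toDual_symm_apply]
    simp
    rfl
  have hb_spec : ∀ p : EuclideanSpace ℝ I, ⟪b, p⟫ = f (0, p, 0) := by
    intro p
    rw [hb, InnerProductSpace.toDual_symm_apply]
    simp
  have hc_spec : ∀ u : EuclideanSpace ℝ I, ⟪c, u⟫ = f (0, 0, u) := by
    intro u
    rw [hc, InnerProductSpace.toDual_symm_apply]
    simp
  have hrep : ∀ x : EuclideanSpace ℝ J × EuclideanSpace ℝ I × EuclideanSpace ℝ I,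
      f x = pr x (a, b, c) := by
    intro x
    have hx : x = (x.1, 0, 0) + (0, x.2.1, 0) + (0, 0, x.2.2) := by
      simp [Prod.ext_iff]
    conv_lhs => rw [hx, map_add, map_add]
    rw [← ha_spec, ← hb_spec, ← hc_spec]
    show (⟪a, x.1⟫ + ⟪b, x.2.1⟫ + ⟪c, x.2.2⟫ : ℝ)
      = ⟪x.1, a⟫ + ⟪x.2.1, b⟫ + ⟪x.2.2, c⟫
    rw [real_inner_comm a, real_inner_comm b, real_inner_comm c]
  have habc : (a, b, c) = (0 : EuclideanSpace ℝ J × EuclideanSpace ℝ I × EuclideanSpace ℝ I) := by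
    refine key (a, b, c) fun k v => ?_
    rw [← hrep]
    refine hfS _ ?_
    exact (le_iSup (fun k : ℕ => LinearMap.range ((A ^ k) ∘ₗ B)) k) ⟨v, rfl⟩
  refine hf0 (LinearMap.ext fun x => ?_)
  rw [hrep x, habc]
  simp [pr]
end

section
/- Let (φ_m)_{m∈ℕ} be an orthonormal basis of L²([0,1];ℝ), set ψ_m(t) := ∫₀^t φ_m(s) ds, and assume Σ_{m∈ℕ} ‖ψ_m‖_∞² < ∞, where ‖ψ_m‖_∞ := sup_{t∈[0,1]} |ψ_m(t)|. Let Q be a set of functions of the form η(t) = ∫₀^t h_η(s) ds with h_η ∈ L²([0,1];ℝ), and suppose Q is bounded in the W^{1,2}_0 norm, i.e. sup_{η∈Q} (∫₀^1 h_η(s)² ds)^{1/2} < ∞. Then lim_{N→∞} sup_{η∈Q} sup_{t∈[0,1]} |η(t) − Σ_{m=1}^N (∫₀^1 φ_m(s) h_η(s) ds) ψ_m(t)| = 0; that is, the projections Π_N onto span{ψ_1,…,ψ_N} converge to the identity uniformly on Q in the supremum norm. -/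
open MeasureTheory

section Aux

variable {μ : Measure ℝ} [IsFiniteMeasure μ]

private lemma stmt14_int_mul {f g : ℝ → ℝ} (hf : MemLp f 2 μ) (hg : MemLp g 2 μ) :
    Integrable (fun s => f s * g s) μ := by
  refine memLp_one_iff_integrable.mp (hg.smul hf (r := 1))

/-- Bessel's inequality from orthonormality. -/
private lemma stmt14_bessel (φ : ℕ → ℝ → ℝ) (hφ : ∀ m, MemLp (φ m) 2 μ)
    (hON : ∀ m m' : ℕ, (∫ s, φ m s * φ m' s ∂μ) = if m = m' then 1 else 0)
    (h : ℝ → ℝ) (hh : MemLp h 2 μ) (N : ℕ) :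
    ∑ m ∈ Finset.range N, (∫ s, φ m s * h s ∂μ) ^ 2 ≤ ∫ s, h s ^ 2 ∂μ := by
  set c : ℕ → ℝ := fun m => ∫ s, φ m s * h s ∂μ with hc
  have hcm : ∀ m, (∫ s, φ m s * h s ∂μ) = c m := fun m => rfl
  set S : ℝ → ℝ := fun s => ∑ m ∈ Finset.range N, c m * φ m s with hS
  have hSmem : MemLp S 2 μ :=
    memLp_finset_sum (f := fun m s => c m * φ m s) (Finset.range N)
      (fun m _ => (hφ m).const_mul (c m))
  have ihh : Integrable (fun s => h s * h s) μ := stmt14_int_mul hh hh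
  have ihS : Integrable (fun s => h s * S s) μ := stmt14_int_mul hh hSmem
  have iSS : Integrable (fun s => S s * S s) μ := stmt14_int_mul hSmem hSmem
  have e1 : ∫ s, (h s - S s) ^ 2 ∂μ
      = ∫ s, h s * h s ∂μ - 2 * ∫ s, h s * S s ∂μ + ∫ s, S s * S s ∂μ := by
    have hpt : (fun s => (h s - S s) ^ 2)
        = fun s => (h s * h s - 2 * (h s * S s)) + S s * S s := by
      funext s; ring
    have i2 : Integrable (fun s => 2 * (h s * S s)) μ := ihS.const_mul 2
    have i1 : Integrable (fun s => h s * h s - 2 * (h s * S s)) μ := ihh.sub i2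
    rw [hpt, integral_add i1 iSS, integral_sub ihh i2, integral_const_mul]
  have e2 : ∫ s, h s * S s ∂μ = ∑ m ∈ Finset.range N, c m ^ 2 := by
    have hpt : (fun s => h s * S s)
        = fun s => ∑ m ∈ Finset.range N, c m * (φ m s * h s) := by
      funext s
      rw [hS, Finset.mul_sum]
      exact Finset.sum_congr rfl fun m _ => by ring
    rw [hpt, integral_finset_sum _
      (fun m _ => (stmt14_int_mul (hφ m) hh).const_mul (c m))]
    refine Finset.sum_congr rfl fun m _ => ?_
    rw [integral_const_mul, hcm m]; ring
  have e3 : ∫ s, S s * S s ∂μ = ∑ m ∈ Finset.range N, c m ^ 2 := by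
    have hpt : (fun s => S s * S s)
        = fun s => ∑ m ∈ Finset.range N, ∑ m' ∈ Finset.range N,
            (c m * c m') * (φ m s * φ m' s) := by
      funext s
      rw [hS, Finset.sum_mul_sum]
      exact Finset.sum_congr rfl fun m _ =>
        Finset.sum_congr rfl fun m' _ => by ring
    rw [hpt, integral_finset_sum _ (fun m _ => integrable_finset_sum _
      (fun m' _ => (stmt14_int_mul (hφ m) (hφ m')).const_mul (c m * c m')))]
    refine Finset.sum_congr rfl fun m hm => ?_
    rw [integral_finset_sum _
      (fun m' _ => (stmt14_int_mul (hφ m) (hφ m')).const_mul (c m * c m'))]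
    have : ∀ m' ∈ Finset.range N,
        (∫ s, (c m * c m') * (φ m s * φ m' s) ∂μ)
          = if m = m' then c m * c m' else 0 := by
      intro m' _
      rw [integral_const_mul, hON m m']
      by_cases hmm : m = m' <;> simp [hmm]
    rw [Finset.sum_congr rfl this, Finset.sum_ite_eq _ m (fun m' => c m * c m')]
    simp [hm, sq]
  have h0 : 0 ≤ ∫ s, (h s - S s) ^ 2 ∂μ := integral_nonneg fun s => sq_nonneg _
  have hh2 : ∫ s, h s * h s ∂μ = ∫ s, h s ^ 2 ∂μ := by
    congr 1; funext s; ring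
  rw [e1, e2, e3, hh2] at h0
  linarith

/-- Polarization: the generalized Parseval identity. -/
private lemma stmt14_polar (φ : ℕ → ℝ → ℝ) (hφ : ∀ m, MemLp (φ m) 2 μ)
    (hON : ∀ m m' : ℕ, (∫ s, φ m s * φ m' s ∂μ) = if m = m' then 1 else 0)
    (hP : ∀ h : ℝ → ℝ, MemLp h 2 μ →
      (∑' m : ℕ, (∫ s, φ m s * h s ∂μ) ^ 2) = ∫ s, h s ^ 2 ∂μ)
    {h g : ℝ → ℝ} (hh : MemLp h 2 μ) (hg : MemLp g 2 μ) :
    ∑' m : ℕ, (∫ s, φ m s * h s ∂μ) * (∫ s, φ m s * g s ∂μ)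
      = ∫ s, h s * g s ∂μ := by
  set a : ℕ → ℝ := fun m => ∫ s, φ m s * h s ∂μ with ha
  set b : ℕ → ℝ := fun m => ∫ s, φ m s * g s ∂μ with hb
  have hSa : Summable fun m => a m ^ 2 :=
    summable_of_sum_range_le (fun m => sq_nonneg _)
      (fun n => stmt14_bessel φ hφ hON h hh n)
  have hSb : Summable fun m => b m ^ 2 :=
    summable_of_sum_range_le (fun m => sq_nonneg _)
      (fun n => stmt14_bessel φ hφ hON g hg n)
  have hSab : Summable fun m => a m * b m := by
    refine Summable.of_abs (Summable.of_nonneg_of_le (fun m => abs_nonneg _)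
      (fun m => ?_) ((hSa.add hSb).div_const 2))
    rw [abs_mul]
    nlinarith [sq_nonneg (|a m| - |b m|), sq_abs (a m), sq_abs (b m),
      abs_nonneg (a m), abs_nonneg (b m)]
  have key : ∑' m, (a m + b m) ^ 2
      = (∑' m, a m ^ 2) + (2 * ∑' m, a m * b m) + ∑' m, b m ^ 2 := by
    have hpt : ∀ m, (a m + b m) ^ 2 = a m ^ 2 + (2 * (a m * b m) + b m ^ 2) := by
      intro m; ring
    rw [tsum_congr hpt, Summable.tsum_add hSa ((hSab.mul_left 2).add hSb),
      Summable.tsum_add (hSab.mul_left 2) hSb, tsum_mul_left]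
    ring
  have hab : ∀ m, (∫ s, φ m s * (h s + g s) ∂μ) = a m + b m := by
    intro m
    have : (fun s => φ m s * (h s + g s))
        = fun s => φ m s * h s + φ m s * g s := by funext s; ring
    rw [this, integral_add (stmt14_int_mul (hφ m) hh) (stmt14_int_mul (hφ m) hg)]
  have hPsum : ∑' m, (a m + b m) ^ 2 = ∫ s, (h s + g s) ^ 2 ∂μ := by
    calc ∑' m, (a m + b m) ^ 2
        = ∑' m, (∫ s, φ m s * (h s + g s) ∂μ) ^ 2 :=
          tsum_congr fun m => by rw [hab m]
      _ = ∫ s, (h s + g s) ^ 2 ∂μ := hP _ (hh.add hg)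
  have hexp : ∫ s, (h s + g s) ^ 2 ∂μ
      = (∫ s, h s ^ 2 ∂μ) + (2 * ∫ s, h s * g s ∂μ) + ∫ s, g s ^ 2 ∂μ := by
    have hpt : (fun s => (h s + g s) ^ 2)
        = fun s => h s ^ 2 + (2 * (h s * g s) + g s ^ 2) := by funext s; ring
    have ih2 : Integrable (fun s => h s ^ 2) μ := hh.integrable_sq
    have ig2 : Integrable (fun s => g s ^ 2) μ := hg.integrable_sq
    have ihg : Integrable (fun s => h s * g s) μ := stmt14_int_mul hh hg
    have i2 : Integrable (fun s => 2 * (h s * g s) + g s ^ 2) μ :=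
      (ihg.const_mul 2).add ig2
    rw [hpt, integral_add ih2 i2, integral_add (ihg.const_mul 2) ig2,
      integral_const_mul]
    ring
  have hPa : (∑' m, a m ^ 2) = ∫ s, h s ^ 2 ∂μ := hP h hh
  have hPb : (∑' m, b m ^ 2) = ∫ s, g s ^ 2 ∂μ := hP g hg
  rw [hexp] at hPsum
  rw [key] at hPsum
  linarith

end Aux

set_option maxHeartbeats 1000000 in
/-- Let `(φ_m)` be an orthonormal basis of `L²([0,1];ℝ)` (orthonormality and
Parseval's identity are hypothesized), `ψ_m(t) = ∫₀^t φ_m`, with `Σ_m ‖ψ_m‖_∞² < ∞`. If `Q` is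
a set of functions `η(t) = ∫₀^t h_η` bounded in the `W^{1,2}_0` norm, then the projections onto
`span{ψ_1, …, ψ_N}` converge to the identity uniformly on `Q` in the supremum norm on `[0,1]`. -/
theorem stmt14 (φ : ℕ → ℝ → ℝ)
    (hφL2 : ∀ m, MemLp (φ m) 2 (volume.restrict (Set.Ioc (0:ℝ) 1)))
    (hON : ∀ m m' : ℕ,
      (∫ s in (0:ℝ)..1, φ m s * φ m' s) = if m = m' then 1 else 0)
    (hParseval : ∀ h : ℝ → ℝ, MemLp h 2 (volume.restrict (Set.Ioc (0:ℝ) 1)) →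
      (∑' m : ℕ, (∫ s in (0:ℝ)..1, φ m s * h s) ^ 2) = ∫ s in (0:ℝ)..1, (h s) ^ 2)
    (ψ : ℕ → ℝ → ℝ) (hψ : ∀ m t, ψ m t = ∫ s in (0:ℝ)..t, φ m s)
    (hsum : Summable fun m : ℕ => (⨆ t : Set.Icc (0:ℝ) 1, |ψ m t|) ^ 2)
    (Q : Set (ℝ → ℝ)) (H : (ℝ → ℝ) → (ℝ → ℝ))
    (hQH : ∀ η ∈ Q, MemLp (H η) 2 (volume.restrict (Set.Ioc (0:ℝ) 1)) ∧
      ∀ t : ℝ, η t = ∫ s in (0:ℝ)..t, H η s)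
    (hQbdd : ∃ Cb : ℝ, ∀ η ∈ Q, (∫ s in (0:ℝ)..1, (H η s) ^ 2) ≤ Cb) :
    ∀ ε > (0:ℝ), ∃ N₀ : ℕ, ∀ N ≥ N₀, ∀ η ∈ Q, ∀ t ∈ Set.Icc (0:ℝ) 1,
      |η t - ∑ m ∈ Finset.range N, (∫ s in (0:ℝ)..1, φ m s * H η s) * ψ m t| < ε := by
  set μ : Measure ℝ := volume.restrict (Set.Ioc (0:ℝ) 1) with hμ
  haveI : IsFiniteMeasure μ :=
    ⟨by rw [hμ, Measure.restrict_apply_univ, Real.volume_Ioc]; exact ENNReal.ofReal_lt_top⟩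
  have key : ∀ f : ℝ → ℝ, (∫ s in (0:ℝ)..1, f s) = ∫ s, f s ∂μ := by
    intro f
    rw [intervalIntegral.integral_of_le (by norm_num : (0:ℝ) ≤ 1)]
  -- translated hypotheses
  have hON' : ∀ m m' : ℕ, (∫ s, φ m s * φ m' s ∂μ) = if m = m' then 1 else 0 := by
    intro m m'; rw [← key]; exact hON m m'
  have hP' : ∀ h : ℝ → ℝ, MemLp h 2 μ →
      (∑' m : ℕ, (∫ s, φ m s * h s ∂μ) ^ 2) = ∫ s, h s ^ 2 ∂μ := by
    intro h hh
    calc ∑' m : ℕ, (∫ s, φ m s * h s ∂μ) ^ 2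
        = ∑' m : ℕ, (∫ s in (0:ℝ)..1, φ m s * h s) ^ 2 :=
          tsum_congr fun m => by rw [key (fun s => φ m s * h s)]
      _ = ∫ s in (0:ℝ)..1, h s ^ 2 := hParseval h hh
      _ = ∫ s, h s ^ 2 ∂μ := key _
  obtain ⟨Cb, hCb⟩ := hQbdd
  -- the sup bound on ψ
  have hψ_bdd : ∀ m, BddAbove (Set.range fun t : Set.Icc (0:ℝ) 1 => |ψ m ↑t|) := by
    intro m
    refine ⟨∫ s, |φ m s| ∂μ, ?_⟩
    rintro x ⟨⟨t, ht⟩, rfl⟩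
    show |ψ m t| ≤ ∫ s, |φ m s| ∂μ
    have hintμ : Integrable (φ m) μ := (hφL2 m).integrable (by norm_num)
    have hint_t : IntegrableOn (φ m) (Set.Ioc 0 t) volume := by
      refine Integrable.mono_measure ?_ (Measure.restrict_mono (Set.Ioc_subset_Ioc_right ht.2) le_rfl)
      exact hintμ
    have h1 : ψ m t = ∫ s in Set.Ioc (0:ℝ) t, φ m s := by
      rw [hψ m t, intervalIntegral.integral_of_le ht.1]
    rw [h1]
    calc |∫ s in Set.Ioc (0:ℝ) t, φ m s| ≤ ∫ s in Set.Ioc (0:ℝ) t, |φ m s| := by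
          simpa [Real.norm_eq_abs] using
            norm_integral_le_integral_norm (μ := volume.restrict (Set.Ioc (0:ℝ) t)) (φ m)
      _ ≤ ∫ s in Set.Ioc (0:ℝ) 1, |φ m s| := by
          refine setIntegral_mono_set hintμ.abs ?_ ?_
          · exact Filter.Eventually.of_forall fun s => abs_nonneg _
          · exact Filter.Eventually.of_forall fun s hs => Set.Ioc_subset_Ioc_right ht.2 hs
      _ = ∫ s, |φ m s| ∂μ := rfl
  obtain ⟨S, hsumS, hS2⟩ : ∃ S : ℕ → ℝ, Summable S ∧
      ∀ m : ℕ, ∀ t' ∈ Set.Icc (0:ℝ) 1, (ψ m t') ^ 2 ≤ S m := by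
    refine ⟨fun m => (⨆ t : Set.Icc (0:ℝ) 1, |ψ m t|) ^ 2, hsum, ?_⟩
    intro m t' ht'
    calc (ψ m t') ^ 2 = |ψ m t'| ^ 2 := (sq_abs _).symm
      _ ≤ (⨆ t : Set.Icc (0:ℝ) 1, |ψ m ↑t|) ^ 2 :=
          pow_le_pow_left₀ (abs_nonneg _)
            (le_ciSup (hψ_bdd m) (⟨t', ht'⟩ : Set.Icc (0:ℝ) 1)) 2
  have hS_nonneg : ∀ m, 0 ≤ S m := fun m => (sq_nonneg (ψ m 0)).trans
    (hS2 m 0 ⟨le_refl 0, zero_le_one⟩)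
  -- main argument
  intro ε hε
  obtain ⟨θ, hθ, hθC⟩ : ∃ θ : ℝ, 0 < θ ∧ θ * (max Cb 0 + 1) = ε := by
    have hC : (0:ℝ) < max Cb 0 + 1 := by positivity
    exact ⟨ε / (max Cb 0 + 1), div_pos hε hC, div_mul_cancel₀ ε hC.ne'⟩
  have hT : Filter.Tendsto (fun N => ∑' m, S (m + N)) Filter.atTop (nhds 0) :=
    tendsto_sum_nat_add S
  have hev : ∀ᶠ N in Filter.atTop, (∑' m, S (m + N)) < ε * θ :=
    hT.eventually_lt_const (by positivity)
  obtain ⟨N₀, hN₀⟩ := Filter.eventually_atTop.mp hev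
  refine ⟨N₀, fun N hN η hη t ht => ?_⟩
  obtain ⟨hHmem, hη_eq⟩ := hQH η hη
  set a : ℕ → ℝ := fun m => ∫ s, φ m s * H η s ∂μ with hadef
  set g : ℝ → ℝ := Set.indicator (Set.Ioc (0:ℝ) t) (fun _ => (1:ℝ)) with hgdef
  have hgmem : MemLp g 2 μ :=
    ((memLp_const (1:ℝ)).indicator measurableSet_Ioc)
  have hIoc_sub : Set.Ioc (0:ℝ) t ⊆ Set.Ioc (0:ℝ) 1 := Set.Ioc_subset_Ioc_right ht.2
  have hrestrict : μ.restrict (Set.Ioc (0:ℝ) t) = volume.restrict (Set.Ioc (0:ℝ) t) := by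
    rw [hμ, Measure.restrict_restrict measurableSet_Ioc, Set.inter_eq_left.mpr hIoc_sub]
  have hmulg : ∀ f : ℝ → ℝ, (∫ s, f s * g s ∂μ) = ∫ s in (0:ℝ)..t, f s := by
    intro f
    have h1 : (fun s => f s * g s) = Set.indicator (Set.Ioc (0:ℝ) t) f := by
      funext s
      by_cases hs : s ∈ Set.Ioc (0:ℝ) t <;>
        simp [hgdef, Set.indicator_apply, hs]
    rw [h1, integral_indicator measurableSet_Ioc, hrestrict,
      intervalIntegral.integral_of_le ht.1]
  have hb : ∀ m, (∫ s, φ m s * g s ∂μ) = ψ m t := by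
    intro m; rw [hmulg, hψ m t]
  have hηt : η t = ∫ s, H η s * g s ∂μ := by
    rw [hmulg, hη_eq t]
  -- summabilities and Bessel bounds
  have hSa : Summable fun m => a m ^ 2 :=
    summable_of_sum_range_le (fun m => sq_nonneg _)
      (fun n => stmt14_bessel φ hφL2 hON' (H η) hHmem n)
  have hb2_le_S : ∀ m, (ψ m t) ^ 2 ≤ S m := fun m => hS2 m t ht
  have hab_summable : Summable fun m => a m * ψ m t := by
    refine Summable.of_abs (Summable.of_nonneg_of_le (fun m => abs_nonneg _)
      (fun m => ?_) ((hSa.add hsumS).div_const 2))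
    rw [abs_mul]
    have h1 := hb2_le_S m
    nlinarith [sq_nonneg (|a m| - |ψ m t|), sq_abs (a m), sq_abs (ψ m t),
      abs_nonneg (a m), abs_nonneg (ψ m t)]
  -- expansion of η t
  have hexp : η t = ∑' m, a m * ψ m t := by
    have hpol := stmt14_polar φ hφL2 hON' hP' hHmem hgmem
    calc η t = ∫ s, H η s * g s ∂μ := hηt
      _ = ∑' m, (∫ s, φ m s * H η s ∂μ) * (∫ s, φ m s * g s ∂μ) := hpol.symm
      _ = ∑' m, a m * ψ m t := tsum_congr fun m => by rw [hb m]
  -- tail formula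
  have htail : η t - ∑ m ∈ Finset.range N, a m * ψ m t
      = ∑' m, a (m + N) * ψ (m + N) t := by
    have := Summable.sum_add_tsum_nat_add (f := fun m => a m * ψ m t) N hab_summable
    rw [hexp]
    linarith [this]
  -- bound on the tail
  have hSa_shift : Summable fun m => a (m + N) ^ 2 := (summable_nat_add_iff N).mpr hSa
  have hS_shift : Summable fun m => S (m + N) := (summable_nat_add_iff N).mpr hsumS
  have hbound : ∀ m, |a (m + N) * ψ (m + N) t|
      ≤ θ / 2 * a (m + N) ^ 2 + 1 / (2 * θ) * S (m + N) := by
    intro m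
    rw [abs_mul]
    have h1 : (ψ (m + N) t) ^ 2 ≤ S (m + N) := hb2_le_S (m + N)
    have key2 : |a (m + N)| * |ψ (m + N) t|
        ≤ θ / 2 * a (m + N) ^ 2 + 1 / (2 * θ) * (ψ (m + N) t) ^ 2 := by
      have habs2 : a (m + N) ^ 2 = |a (m + N)| ^ 2 := (sq_abs _).symm
      have hψabs2 : (ψ (m + N) t) ^ 2 = |ψ (m + N) t| ^ 2 := (sq_abs _).symm
      rw [habs2, hψabs2]
      set A : ℝ := |a (m + N)| with hA
      set B : ℝ := |ψ (m + N) t| with hB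
      have h2θ : (0:ℝ) < 2 * θ := by positivity
      have hcancel : (2 * θ) * (1 / (2 * θ)) = 1 := mul_one_div_cancel h2θ.ne'
      have expand : (2 * θ) * (θ / 2 * A ^ 2 + 1 / (2 * θ) * B ^ 2 - A * B)
          = (θ * A - B) ^ 2 := by
        calc (2 * θ) * (θ / 2 * A ^ 2 + 1 / (2 * θ) * B ^ 2 - A * B)
            = θ ^ 2 * A ^ 2 - 2 * θ * (A * B) + ((2 * θ) * (1 / (2 * θ))) * B ^ 2 := by
              ring
          _ = (θ * A - B) ^ 2 := by rw [hcancel]; ring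
      have hX : θ / 2 * A ^ 2 + 1 / (2 * θ) * B ^ 2 - A * B
          = (θ * A - B) ^ 2 / (2 * θ) := by
        rw [eq_div_iff h2θ.ne']
        linarith [expand]
      have hnn : 0 ≤ (θ * A - B) ^ 2 / (2 * θ) := div_nonneg (sq_nonneg _) h2θ.le
      linarith
    have h4 : 1 / (2 * θ) * (ψ (m + N) t) ^ 2 ≤ 1 / (2 * θ) * S (m + N) :=
      mul_le_mul_of_nonneg_left h1 (by positivity)
    linarith
  have hRHS_summable : Summable fun m => θ / 2 * a (m + N) ^ 2 + 1 / (2 * θ) * S (m + N) :=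
    (hSa_shift.mul_left _).add (hS_shift.mul_left _)
  have habs_shift : Summable fun m => |a (m + N) * ψ (m + N) t| :=
    Summable.of_nonneg_of_le (fun m => abs_nonneg _) hbound hRHS_summable
  have hnormsum : Summable fun m => ‖a (m + N) * ψ (m + N) t‖ := by
    simpa only [Real.norm_eq_abs] using habs_shift
  have h5 : |∑' m, a (m + N) * ψ (m + N) t| ≤ ∑' m, |a (m + N) * ψ (m + N) t| := by
    have h := norm_tsum_le_tsum_norm hnormsum
    simpa only [Real.norm_eq_abs] using h
  have h6 : (∑' m, |a (m + N) * ψ (m + N) t|)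
      ≤ ∑' m, (θ / 2 * a (m + N) ^ 2 + 1 / (2 * θ) * S (m + N)) :=
    Summable.tsum_le_tsum hbound habs_shift hRHS_summable
  have h7 : (∑' m, (θ / 2 * a (m + N) ^ 2 + 1 / (2 * θ) * S (m + N)))
      = θ / 2 * (∑' m, a (m + N) ^ 2) + 1 / (2 * θ) * ∑' m, S (m + N) := by
    rw [Summable.tsum_add (hSa_shift.mul_left _) (hS_shift.mul_left _), tsum_mul_left, tsum_mul_left]
  -- bounding the two pieces
  have ha_total : (∑' m, a m ^ 2) ≤ Cb := by
    have := hP' (H η) hHmem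
    rw [this, ← key]
    exact hCb η hη
  have ha_shift_le : (∑' m, a (m + N) ^ 2) ≤ ∑' m, a m ^ 2 := by
    have := Summable.sum_add_tsum_nat_add (f := fun m => a m ^ 2) N hSa
    have hpos : 0 ≤ ∑ m ∈ Finset.range N, a m ^ 2 :=
      Finset.sum_nonneg fun m _ => sq_nonneg _
    linarith
  have hfirst : θ / 2 * (∑' m, a (m + N) ^ 2) ≤ ε / 2 := by
    have h1 : (∑' m, a (m + N) ^ 2) ≤ max Cb 0 + 1 := by
      have : Cb ≤ max Cb 0 := le_max_left _ _
      linarith [ha_shift_le, ha_total]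
    calc θ / 2 * (∑' m, a (m + N) ^ 2) ≤ θ / 2 * (max Cb 0 + 1) := by
          apply mul_le_mul_of_nonneg_left h1 (by positivity)
      _ = ε / 2 := by rw [div_mul_eq_mul_div, hθC]
  have hsecond : 1 / (2 * θ) * (∑' m, S (m + N)) < ε / 2 := by
    have hTN := hN₀ N hN
    have h2θ : 0 < 2 * θ := by positivity
    rw [div_mul_eq_mul_div, one_mul, div_lt_div_iff₀ h2θ (by norm_num : (0:ℝ) < 2)]
    calc (∑' m, S (m + N)) * 2 < ε * θ * 2 := by
          apply mul_lt_mul_of_pos_right hTN (by norm_num)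
      _ = ε * (2 * θ) := by ring
  -- conclude
  have hfinal : |η t - ∑ m ∈ Finset.range N, a m * ψ m t| < ε := by
    rw [htail]
    calc |∑' m, a (m + N) * ψ (m + N) t|
        ≤ θ / 2 * (∑' m, a (m + N) ^ 2) + 1 / (2 * θ) * ∑' m, S (m + N) := by
          rw [← h7]; exact h5.trans h6
      _ < ε / 2 + ε / 2 := by linarith
      _ = ε := by ring
  have hcoef : ∀ m, (∫ s in (0:ℝ)..1, φ m s * H η s) = a m := by
    intro m; rw [key (fun s => φ m s * H η s)]
  calc |η t - ∑ m ∈ Finset.range N, (∫ s in (0:ℝ)..1, φ m s * H η s) * ψ m t|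
      = |η t - ∑ m ∈ Finset.range N, a m * ψ m t| := by
        congr 2
        exact Finset.sum_congr rfl fun m _ => by rw [hcoef m]
    _ < ε := hfinal
end
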